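/- Let T, U, V be based association schemes on based sets X, Y, Z, and let φ ∈ Hom_C(T,U) and ψ ∈ Hom_C(U,V). Then T_{φψ} is a normal closed subset of T and V_{φψ} is a normal closed subset of V; the assignment xT_{φψ} ↦ zV_{φψ} (where y is chosen with (xT_φ)φ̃ = yU_φ and z with (yU_ψ)ψ̃ = zV_ψ) is well-defined, independent of the choices, and determines a based isomorphism of schemes (φψ)~: T//T_{φψ} → V//V_{φψ}. Moreover, for t ∈ T and v ∈ V, one has t^{T_{φψ}}(φψ)~ = v^{V_{φψ}} if and only if there exists u ∈ U with t^{T_φ}φ̃ = u^{U_φ} and u^{U_ψ}ψ̃ = v^{V_ψ}. -/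
import Mathlib


/-!
Common framework for association schemes, following the paper
"A new semidirect product for association schemes".
-/

/-- The diagonal relation `1_X` on a set `X`. -/
def diagRel (X : Type) : Set (X × X) := {w | w.1 = w.2}

/-- The transpose `s*` of a relation. -/
def transp {X : Type} (s : Set (X × X)) : Set (X × X) := Prod.swap '' s

/-- The structure constant `a_{pqr}`: for `(x,y) ∈ r`, the number of `z` with
`(x,z) ∈ p` and `(z,y) ∈ q` (well-defined for elements of a scheme). -/
noncomputable def aC {X : Type} (p q r : Set (X × X)) : ℕ :=
  sSup {n | ∃ w ∈ r, n = Nat.card {z : X // (w.1, z) ∈ p ∧ (z, w.2) ∈ q}}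

/-- `S` is an association scheme on `X`. -/
def IsScheme {X : Type} (S : Set (Set (X × X))) : Prop :=
  (∀ s ∈ S, s.Nonempty) ∧
  (∀ w : X × X, ∃! s, s ∈ S ∧ w ∈ s) ∧
  diagRel X ∈ S ∧
  (∀ s ∈ S, transp s ∈ S) ∧
  (∀ p ∈ S, ∀ q ∈ S, ∀ r ∈ S, ∀ w ∈ r,
    Nat.card {z : X // (w.1, z) ∈ p ∧ (z, w.2) ∈ q} = aC p q r)

/-- Complex product of two relations relative to a scheme `S`:
`pq = {r ∈ S : a_{pqr} > 0}`. -/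
noncomputable def cmulS {X : Type} (S : Set (Set (X × X))) (p q : Set (X × X)) :
    Set (Set (X × X)) :=
  {r | r ∈ S ∧ 0 < aC p q r}

/-- Complex product of two subsets of a scheme. -/
noncomputable def setMulS {X : Type} (S : Set (Set (X × X)))
    (Pp Qq : Set (Set (X × X))) : Set (Set (X × X)) :=
  ⋃ p ∈ Pp, ⋃ q ∈ Qq, cmulS S p q

/-- `T` is a closed subset of the scheme `S` (i.e. `T ⊆ S` and `T*T ⊆ T`). -/
def IsClosedIn {X : Type} (S T : Set (Set (X × X))) : Prop :=
  T ⊆ S ∧ ∀ p ∈ T, ∀ q ∈ T, cmulS S (transp p) q ⊆ T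

/-- `T` is a normal subset of the scheme `S` (i.e. `pT = Tp` for all `p ∈ S`). -/
noncomputable def IsNormalIn {X : Type} (S T : Set (Set (X × X))) : Prop :=
  ∀ p ∈ S, setMulS S {p} T = setMulS S T {p}

/-- `xs = {y : (x,y) ∈ s}`. -/
def pimg {X : Type} (s : Set (X × X)) (x : X) : Set X := {y | (x, y) ∈ s}

/-- The coset `xT` of a (closed) subset `T` of a scheme. -/
def coset {X : Type} (T : Set (Set (X × X))) (x : X) : Set X :=
  {y | ∃ t ∈ T, (x, y) ∈ t}

/-- The set `X/T` of cosets. -/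
def cosets {X : Type} (T : Set (Set (X × X))) : Set (Set X) :=
  {C | ∃ x, C = coset T x}

/-- The quotient relation `s^T` on cosets. -/
def quotRel {X : Type} (T : Set (Set (X × X))) (s : Set (X × X)) :
    Set (Set X × Set X) :=
  {w | ∃ x₁ x₂, w = (coset T x₁, coset T x₂) ∧
    ∃ p ∈ s, p.1 ∈ coset T x₁ ∧ p.2 ∈ coset T x₂}

/-- The relations of the quotient scheme `S//T`. -/
def quotS {X : Type} (S T : Set (Set (X × X))) : Set (Set (Set X × Set X)) :=
  {r | ∃ s ∈ S, r = quotRel T s}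

/-- A presentation of a (based) scheme: a set of points inside an ambient type,
a set of relations, and a basepoint. -/
structure Pres (P : Type) where
  pts : Set P
  rels : Set (Set (P × P))
  base : P

/-- A scheme `S` on the whole of `X`, based at `x0`, as a presentation. -/
def fullPres {X : Type} (S : Set (Set (X × X))) (x0 : X) : Pres X :=
  ⟨Set.univ, S, x0⟩

/-- The quotient scheme `S//T` on `X/T`, based at `x0 T`, as a presentation. -/
def quotPres {X : Type} (S T : Set (Set (X × X))) (x0 : X) : Pres (Set X) :=
  ⟨cosets T, quotS S T, coset T x0⟩

/-- The subscheme of a scheme defined by the coset `xT` of a closed subset `T`,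
as a presentation. -/
def subPres {X : Type} (T : Set (Set (X × X))) (x : X) : Pres X :=
  ⟨coset T x, {r | ∃ t ∈ T, r = t ∩ (coset T x ×ˢ coset T x)}, x⟩

/-- `f` is a morphism of schemes between two presentations: it maps points to
points, and pairs lying in the same relation to pairs lying in the same relation. -/
def IsMorOn {P Q : Type} (A : Pres P) (B : Pres Q) (f : P → Q) : Prop :=
  Set.MapsTo f A.pts B.pts ∧
  ∀ s ∈ A.rels, ∀ w ∈ s, ∀ w' ∈ s,
    ∃ t ∈ B.rels, (f w.1, f w.2) ∈ t ∧ (f w'.1, f w'.2) ∈ t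

/-- The induced map on scheme elements sends `s` to `t` (i.e. `s φ_S = t`):
every pair of `s` is mapped into `t`. -/
def elemMapsTo {P Q : Type} (f : P → Q) (s : Set (P × P)) (t : Set (Q × Q)) : Prop :=
  ∀ w ∈ s, (f w.1, f w.2) ∈ t

/-- `f` is an isomorphism of schemes: a morphism which is bijective on points and
whose induced map on scheme elements is bijective. -/
def IsIsoOn {P Q : Type} (A : Pres P) (B : Pres Q) (f : P → Q) : Prop :=
  IsMorOn A B f ∧ Set.BijOn f A.pts B.pts ∧
  ∀ t ∈ B.rels, ∃! s, s ∈ A.rels ∧ elemMapsTo f s t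

/-- A based isomorphism of schemes. -/
def IsBasedIsoOn {P Q : Type} (A : Pres P) (B : Pres Q) (f : P → Q) : Prop :=
  IsIsoOn A B f ∧ f A.base = B.base

/-- A based association scheme on a finite based set. -/
structure BScheme : Type 1 where
  X : Type
  fin : Fintype X
  base : X
  S : Set (Set (X × X))
  isScheme : IsScheme S

/-- A morphism in the category 𝒞: a normal closed subset on each side together
with a based isomorphism between the corresponding quotient schemes. -/
structure HomC (A B : BScheme) where
  TN : Set (Set (A.X × A.X))
  UN : Set (Set (B.X × B.X))
  TN_cl : IsClosedIn A.S TN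
  TN_n : IsNormalIn A.S TN
  UN_cl : IsClosedIn B.S UN
  UN_n : IsNormalIn B.S UN
  f : Set A.X → Set B.X
  iso : IsBasedIsoOn (quotPres A.S TN A.base) (quotPres B.S UN B.base) f

/-- `t^{T_φ} φ̃ = u^{U_φ}`: the induced map on quotient scheme elements sends
the class of `t` to the class of `u`. -/
def elemRel {A B : BScheme} (φ : HomC A B) (t : Set (A.X × A.X))
    (u : Set (B.X × B.X)) : Prop :=
  elemMapsTo φ.f (quotRel φ.TN t) (quotRel φ.UN u)

/-- The normal closed subset `T_{φψ}` of the composite. -/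
def Tcomp {A B C : BScheme} (φ : HomC A B) (ψ : HomC B C) :
    Set (Set (A.X × A.X)) :=
  {t | t ∈ A.S ∧ ∃ u ∈ B.S, elemRel φ t u ∧ elemRel ψ u (diagRel C.X)}

/-- The normal closed subset `V_{φψ}` of the composite. -/
def Vcomp {A B C : BScheme} (φ : HomC A B) (ψ : HomC B C) :
    Set (Set (C.X × C.X)) :=
  {v | v ∈ C.S ∧ ∃ u ∈ B.S, elemRel φ (diagRel A.X) u ∧ elemRel ψ u v}

/-- `ρ` is a composite of `φ` and `ψ` in the category 𝒞. -/
def IsComposite {A B C : BScheme} (φ : HomC A B) (ψ : HomC B C) (ρ : HomC A C) : Prop :=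
  ρ.TN = Tcomp φ ψ ∧ ρ.UN = Vcomp φ ψ ∧
  ∀ (x : A.X) (y : B.X) (z : C.X),
    φ.f (coset φ.TN x) = coset φ.UN y →
    ψ.f (coset ψ.TN y) = coset ψ.UN z →
    ρ.f (coset (Tcomp φ ψ) x) = coset (Vcomp φ ψ) z

/-- The identity morphism of 𝒞 at `A`: both normal closed subsets are `{1_X}`
and the isomorphism is the identity of `A//{1_X}`. -/
def IsIdHom {A : BScheme} (ι : HomC A A) : Prop :=
  ι.TN = {diagRel A.X} ∧ ι.UN = {diagRel A.X} ∧
  ∀ x : A.X, ι.f (coset {diagRel A.X} x) = coset {diagRel A.X} x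

/-- A `τ_T`-scheme on the based set underlying `T`. -/
structure TauSchemeOn (T : BScheme) where
  rels : Set (Set (T.X × T.X))
  isScheme : IsScheme rels
  alpha : Set (T.X × T.X) → Set (T.X × T.X)
  alpha_bij : Set.BijOn alpha T.S rels
  alpha_one : alpha (diagRel T.X) = diagRel T.X
  alpha_star : ∀ p ∈ T.S, alpha (transp p) = transp (alpha p)
  alpha_const : ∀ p ∈ T.S, ∀ q ∈ T.S, ∀ r ∈ T.S,
    aC p q r = aC (alpha p) (alpha q) (alpha r)

/-- The based scheme underlying a `τ`-scheme. -/
abbrev TauSchemeOn.toB {T : BScheme} (Z : TauSchemeOn T) : BScheme :=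
  ⟨T.X, T.fin, T.base, Z.rels, Z.isScheme⟩

/-- An action `ζ` of a based scheme `U` on a based scheme `T`. -/
structure SchemeAction (U T : BScheme) where
  /-- the `τ`-scheme `ζ_y = (T_y, α^y)` for each `y ∈ Y` -/
  Z : U.X → TauSchemeOn T
  /-- the morphism `ζ_{y₁}^{y₂} ∈ Hom_𝒞(T_{y₁}, T_{y₂})` -/
  hom : ∀ y1 y2 : U.X, HomC (Z y1).toB (Z y2).toB
  /-- (1) `T_{y*} = T` -/
  base_rels : (Z U.base).rels = T.S
  /-- (1) `α^{y*} = id` -/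
  base_alpha : ∀ p, (Z U.base).alpha p = p
  /-- (2) `ζ_y^y` is the identity morphism -/
  hom_refl_TN : ∀ y : U.X, (hom y y).TN = {diagRel T.X}
  hom_refl_UN : ∀ y : U.X, (hom y y).UN = {diagRel T.X}
  hom_refl_f : ∀ (y : U.X) (x : T.X),
    (hom y y).f (coset {diagRel T.X} x) = coset {diagRel T.X} x
  /-- (3) `ζ_{y₂}^{y₁} = (ζ_{y₁}^{y₂})*` -/
  hom_symm_TN : ∀ y1 y2 : U.X, (hom y2 y1).TN = (hom y1 y2).UN
  hom_symm_UN : ∀ y1 y2 : U.X, (hom y2 y1).UN = (hom y1 y2).TN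
  hom_symm_f : ∀ y1 y2 : U.X,
    Set.InvOn (hom y2 y1).f (hom y1 y2).f
      (cosets (hom y1 y2).TN) (cosets (hom y1 y2).UN)
  /-- (4) `ζ_{y₁}^{y₂}(τ)` depends only on the element `u ∈ U` containing `(y₁,y₂)` -/
  zeta_welldef : ∀ u ∈ U.S, ∀ y1 y2 y1' y2' : U.X, (y1, y2) ∈ u → (y1', y2') ∈ u →
    ∀ Pp : Set (Set (T.X × T.X)),
      {u' | u' ∈ T.S ∧ ∃ t ∈ Pp,
        elemRel (hom y1 y2) ((Z y1).alpha t) ((Z y2).alpha u')} =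
      {u' | u' ∈ T.S ∧ ∃ t ∈ Pp,
        elemRel (hom y1' y2') ((Z y1').alpha t) ((Z y2').alpha u')}
  /-- (5) `ζ_{y₁}^{y₃} ≤ ζ_{y₁}^{y₂} ζ_{y₂}^{y₃}` -/
  le_comp : ∀ y1 y2 y3 : U.X,
    (hom y1 y3).TN ⊆ Tcomp (hom y1 y2) (hom y2 y3) ∧
    (hom y1 y3).UN ⊆ Vcomp (hom y1 y2) (hom y2 y3) ∧
    ∀ x x2 x3 : T.X,
      (hom y1 y2).f (coset (hom y1 y2).TN x) = coset (hom y1 y2).UN x2 →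
      (hom y2 y3).f (coset (hom y2 y3).TN x2) = coset (hom y2 y3).UN x3 →
      (hom y1 y3).f (coset (hom y1 y3).TN x) ⊆
        coset (Vcomp (hom y1 y2) (hom y2 y3)) x3

/-- The map `ζ_u` on subsets of `τ` induced by any `(y₁,y₂) ∈ u`. -/
def SchemeAction.zetaU {U T : BScheme} (act : SchemeAction U T)
    (u : Set (U.X × U.X)) (Pp : Set (Set (T.X × T.X))) : Set (Set (T.X × T.X)) :=
  {u' | ∃ y1 y2 : U.X, (y1, y2) ∈ u ∧ u' ∈ T.S ∧
    ∃ t ∈ Pp, elemRel (act.hom y1 y2) ((act.Z y1).alpha t) ((act.Z y2).alpha u')}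

/-- The relation `[u,t]` on `Y × X`. -/
def SchemeAction.rel {U T : BScheme} (act : SchemeAction U T)
    (u : Set (U.X × U.X)) (t : Set (T.X × T.X)) :
    Set ((U.X × T.X) × (U.X × T.X)) :=
  {w | (w.1.1, w.2.1) ∈ u ∧
    ((act.hom w.1.1 w.2.1).f (coset (act.hom w.1.1 w.2.1).TN w.1.2),
      coset (act.hom w.1.1 w.2.1).UN w.2.2) ∈
      quotRel (act.hom w.1.1 w.2.1).UN ((act.Z w.2.1).alpha t)}

/-- The semidirect product `U ⋉_ζ T` as a set of relations on `Y × X`. -/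
def SchemeAction.sdp {U T : BScheme} (act : SchemeAction U T) :
    Set (Set ((U.X × T.X) × (U.X × T.X))) :=
  {r | ∃ u ∈ U.S, ∃ t ∈ T.S, r = act.rel u t}

/-- The valency `n_s = a_{s s* 1}` of a relation. -/
noncomputable def nval {X : Type} (s : Set (X × X)) : ℕ :=
  aC s (transp s) (diagRel X)


/-! ### Basic infrastructure -/

section Basic

variable {X : Type} [Fintype X] {S : Set (Set (X × X))}

lemma mem_transp {s : Set (X × X)} {x y : X} : (x, y) ∈ transp s ↔ (y, x) ∈ s := by
  constructor
  · rintro ⟨⟨a, b⟩, hab, h⟩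
    simp only [Prod.swap_prod_mk, Prod.mk.injEq] at h
    rwa [← h.1, ← h.2]
  · intro h; exact ⟨(y, x), h, rfl⟩

lemma transp_transp (s : Set (X × X)) : transp (transp s) = s := by
  ext ⟨x, y⟩; rw [mem_transp, mem_transp]

lemma rel_eq_of_mem (hS : IsScheme S) {s s' : Set (X × X)} {w : X × X}
    (hs : s ∈ S) (hs' : s' ∈ S) (h : w ∈ s) (h' : w ∈ s') : s = s' := by
  obtain ⟨r, -, hr⟩ := hS.2.1 w
  rw [hr s ⟨hs, h⟩, hr s' ⟨hs', h'⟩]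

/-- The unique scheme element containing `(x,y)`. -/
noncomputable def relOf (hS : IsScheme S) (x y : X) : Set (X × X) :=
  (hS.2.1 (x, y)).exists.choose

lemma relOf_mem_S (hS : IsScheme S) (x y : X) : relOf hS x y ∈ S :=
  (hS.2.1 (x, y)).exists.choose_spec.1

lemma mem_relOf (hS : IsScheme S) (x y : X) : (x, y) ∈ relOf hS x y :=
  (hS.2.1 (x, y)).exists.choose_spec.2

lemma relOf_eq (hS : IsScheme S) {s : Set (X × X)} {x y : X}
    (hs : s ∈ S) (h : (x, y) ∈ s) : relOf hS x y = s :=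
  rel_eq_of_mem hS (relOf_mem_S hS x y) hs (mem_relOf hS x y) h

lemma scheme_nonempty (hS : IsScheme S) {s : Set (X × X)} (hs : s ∈ S) : s.Nonempty :=
  hS.1 s hs

lemma cmul_elim (hS : IsScheme S) {p q r : Set (X × X)}
    (hp : p ∈ S) (hq : q ∈ S) (hr : r ∈ cmulS S p q) {x y : X} (hxy : (x, y) ∈ r) :
    ∃ z, (x, z) ∈ p ∧ (z, y) ∈ q := by
  have hcard := hS.2.2.2.2 p hp q hq r hr.1 (x, y) hxy
  have hpos : 0 < Nat.card {z : X // (x, z) ∈ p ∧ (z, y) ∈ q} := hcard ▸ hr.2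
  obtain ⟨⟨z, hz⟩⟩ := (Nat.card_pos_iff.mp hpos).1
  exact ⟨z, hz⟩

lemma cmul_intro (hS : IsScheme S) {p q r : Set (X × X)}
    (hp : p ∈ S) (hq : q ∈ S) (hr : r ∈ S) {x y z : X}
    (hxy : (x, y) ∈ r) (h1 : (x, z) ∈ p) (h2 : (z, y) ∈ q) : r ∈ cmulS S p q := by
  refine ⟨hr, ?_⟩
  have hcard := hS.2.2.2.2 p hp q hq r hr (x, y) hxy
  rw [← hcard]
  rw [Nat.card_pos_iff]
  exact ⟨⟨⟨z, h1, h2⟩⟩, inferInstance⟩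

lemma relOf_cmul (hS : IsScheme S) {p q : Set (X × X)} (hp : p ∈ S) (hq : q ∈ S)
    {x z y : X} (h1 : (x, z) ∈ p) (h2 : (z, y) ∈ q) : relOf hS x y ∈ cmulS S p q :=
  cmul_intro hS hp hq (relOf_mem_S hS x y) (mem_relOf hS x y) h1 h2

lemma transp_mem (hS : IsScheme S) {s : Set (X × X)} (hs : s ∈ S) : transp s ∈ S :=
  hS.2.2.2.1 s hs

lemma diag_mem (hS : IsScheme S) : diagRel X ∈ S := hS.2.2.1

lemma mem_diag (x : X) : (x, x) ∈ diagRel X := rfl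

lemma exists_out (hS : IsScheme S) {s : Set (X × X)} (hs : s ∈ S) (x : X) :
    ∃ z, (x, z) ∈ s := by
  obtain ⟨⟨a, b⟩, hab⟩ := scheme_nonempty hS hs
  have hdmem : diagRel X ∈ cmulS S s (transp s) :=
    cmul_intro hS hs (transp_mem hS hs) (diag_mem hS) (mem_diag a) hab (mem_transp.mpr hab)
  obtain ⟨z, hz, -⟩ := cmul_elim hS hs (transp_mem hS hs) hdmem (mem_diag x)
  exact ⟨z, hz⟩

lemma cmul_transp (hS : IsScheme S) {p q r : Set (X × X)} (hp : p ∈ S) (hq : q ∈ S)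
    (hr : r ∈ cmulS S p q) : transp r ∈ cmulS S (transp q) (transp p) := by
  obtain ⟨⟨x, y⟩, hxy⟩ := scheme_nonempty hS hr.1
  obtain ⟨z, h1, h2⟩ := cmul_elim hS hp hq hr hxy
  exact cmul_intro hS (transp_mem hS hq) (transp_mem hS hp) (transp_mem hS hr.1)
    (mem_transp.mpr hxy) (mem_transp.mpr h2) (mem_transp.mpr h1)

end Basic

/-! ### Closed subsets and cosets -/

section Closed

set_option linter.unusedSectionVars false

variable {X : Type} [Fintype X] {S T : Set (Set (X × X))}

lemma diag_mem_closed (hS : IsScheme S) (hT : IsClosedIn S T) (hne : T.Nonempty) :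
    diagRel X ∈ T := by
  obtain ⟨t, ht⟩ := hne
  obtain ⟨⟨a, b⟩, hab⟩ := scheme_nonempty hS (hT.1 ht)
  exact hT.2 t ht t ht
    (cmul_intro hS (transp_mem hS (hT.1 ht)) (hT.1 ht) (diag_mem hS) (mem_diag b)
      (mem_transp.mpr hab) hab)

lemma transp_mem_closed (hS : IsScheme S) (hT : IsClosedIn S T) (hne : T.Nonempty)
    {t : Set (X × X)} (ht : t ∈ T) : transp t ∈ T := by
  obtain ⟨⟨a, b⟩, hab⟩ := scheme_nonempty hS (hT.1 ht)
  exact hT.2 t ht (diagRel X) (diag_mem_closed hS hT hne)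
    (cmul_intro hS (transp_mem hS (hT.1 ht)) (diag_mem hS) (transp_mem hS (hT.1 ht))
      (mem_transp.mpr hab) (mem_transp.mpr hab) (mem_diag a))

lemma cmul_closed (hS : IsScheme S) (hT : IsClosedIn S T) (hne : T.Nonempty)
    {p q : Set (X × X)} (hp : p ∈ T) (hq : q ∈ T) : cmulS S p q ⊆ T := by
  have := hT.2 (transp p) (transp_mem_closed hS hT hne hp) q hq
  rwa [transp_transp] at this

lemma mem_coset_self (hS : IsScheme S) (hT : IsClosedIn S T) (hne : T.Nonempty)
    (x : X) : x ∈ coset T x :=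
  ⟨diagRel X, diag_mem_closed hS hT hne, rfl⟩

lemma coset_symm (hS : IsScheme S) (hT : IsClosedIn S T) (hne : T.Nonempty)
    {x y : X} (h : y ∈ coset T x) : x ∈ coset T y := by
  obtain ⟨t, ht, hxy⟩ := h
  exact ⟨transp t, transp_mem_closed hS hT hne ht, mem_transp.mpr hxy⟩

lemma coset_trans (hS : IsScheme S) (hT : IsClosedIn S T) (hne : T.Nonempty)
    {x y z : X} (h1 : y ∈ coset T x) (h2 : z ∈ coset T y) : z ∈ coset T x := by
  obtain ⟨t, ht, hxy⟩ := h1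
  obtain ⟨t', ht', hyz⟩ := h2
  exact ⟨relOf hS x z,
    cmul_closed hS hT hne ht ht' (relOf_cmul hS (hT.1 ht) (hT.1 ht') hxy hyz),
    mem_relOf hS x z⟩

lemma coset_eq_of_mem (hS : IsScheme S) (hT : IsClosedIn S T) (hne : T.Nonempty)
    {x y : X} (h : y ∈ coset T x) : coset T x = coset T y := by
  ext z
  exact ⟨fun hz => coset_trans hS hT hne (coset_symm hS hT hne h) hz,
    fun hz => coset_trans hS hT hne h hz⟩

lemma mem_closed_of_pair (hS : IsScheme S) (hT : IsClosedIn S T)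
    {s : Set (X × X)} {x y : X} (hs : s ∈ S) (hxy : (x, y) ∈ s)
    (h : y ∈ coset T x) : s ∈ T := by
  obtain ⟨t, ht, hxy'⟩ := h
  rwa [rel_eq_of_mem hS hs (hT.1 ht) hxy hxy']

/-- The key transfer lemma: if one pair of `s'` is `T`-near a pair of `s`, then
every pair of `s` has a `T`-near pair of `s'`. -/
lemma transfer (hS : IsScheme S) (hT : T ⊆ S) {s s' : Set (X × X)}
    (hs : s ∈ S) (hs' : s' ∈ S) {a b a' b' : X}
    (hab : (a, b) ∈ s) (hab' : (a', b') ∈ s')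
    (ha : a' ∈ coset T a) (hb : b' ∈ coset T b) :
    ∀ c d, (c, d) ∈ s → ∃ c' d', (c', d') ∈ s' ∧ c' ∈ coset T c ∧ d' ∈ coset T d := by
  obtain ⟨t1, ht1, hat1⟩ := ha
  obtain ⟨t2, ht2, hbt2⟩ := hb
  -- p := relOf a b' ∈ t1 ∘ s'
  have hp : relOf hS a b' ∈ cmulS S t1 s' :=
    relOf_cmul hS (hT ht1) hs' hat1 hab'
  -- s ∈ p ∘ t2*
  have hsmem : s ∈ cmulS S (relOf hS a b') (transp t2) :=
    cmul_intro hS (relOf_mem_S hS a b') (transp_mem hS (hT ht2)) hs hab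
      (mem_relOf hS a b') (mem_transp.mpr hbt2)
  intro c d hcd
  obtain ⟨e, hce, hed⟩ := cmul_elim hS (relOf_mem_S hS a b') (transp_mem hS (hT ht2)) hsmem hcd
  obtain ⟨m, hcm, hme⟩ := cmul_elim hS (hT ht1) hs' hp hce
  exact ⟨m, e, hme, ⟨t1, ht1, hcm⟩, ⟨t2, ht2, mem_transp.mp hed⟩⟩

lemma quotRel_intro {s : Set (X × X)} {x1 x2 a b : X}
    (hab : (a, b) ∈ s) (ha : a ∈ coset T x1) (hb : b ∈ coset T x2) :
    (coset T x1, coset T x2) ∈ quotRel T s :=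
  ⟨x1, x2, rfl, (a, b), hab, ha, hb⟩

lemma quotRel_nonempty (hS : IsScheme S) (hT : IsClosedIn S T) (hne : T.Nonempty)
    {s : Set (X × X)} {a b : X} (hab : (a, b) ∈ s) :
    (coset T a, coset T b) ∈ quotRel T s :=
  quotRel_intro hab (mem_coset_self hS hT hne a) (mem_coset_self hS hT hne b)

lemma quotRel_eq_of_near (hS : IsScheme S) (hT : IsClosedIn S T) (hne : T.Nonempty)
    {s s' : Set (X × X)} (hs : s ∈ S) (hs' : s' ∈ S) {a b a' b' : X}
    (hab : (a, b) ∈ s) (hab' : (a', b') ∈ s')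
    (ha : a' ∈ coset T a) (hb : b' ∈ coset T b) :
    quotRel T s = quotRel T s' := by
  have main : ∀ (u u' : Set (X × X)), u ∈ S → u' ∈ S → ∀ (c d c' d' : X),
      (c, d) ∈ u → (c', d') ∈ u' → c' ∈ coset T c → d' ∈ coset T d →
      quotRel T u ⊆ quotRel T u' := by
    intro u u' hu hu' c d c' d' hcd hcd' hc hd w hw
    obtain ⟨x1, x2, rfl, ⟨e, f⟩, hef, he, hf⟩ := hw
    obtain ⟨e', f', hef', he', hf'⟩ := transfer hS hT.1 hu hu' hcd hcd' hc hd e f hef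
    exact quotRel_intro hef'
      (coset_trans hS hT hne he he') (coset_trans hS hT hne hf hf')
  apply Set.Subset.antisymm
  · exact main s s' hs hs' a b a' b' hab hab' ha hb
  · exact main s' s hs' hs a' b' a b hab' hab
      (coset_symm hS hT hne ((coset_eq_of_mem hS hT hne ha) ▸ mem_coset_self hS hT hne a'))
      (coset_symm hS hT hne ((coset_eq_of_mem hS hT hne hb) ▸ mem_coset_self hS hT hne b'))

lemma quotRel_elim {s : Set (X × X)} {w : Set X × Set X} (hw : w ∈ quotRel T s) :
    ∃ x1 x2 a b, w = (coset T x1, coset T x2) ∧ (a, b) ∈ s ∧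
      a ∈ coset T x1 ∧ b ∈ coset T x2 := by
  obtain ⟨x1, x2, hw, ⟨a, b⟩, hab, ha, hb⟩ := hw
  exact ⟨x1, x2, a, b, hw, hab, ha, hb⟩

lemma quotRel_eq_of_common (hS : IsScheme S) (hT : IsClosedIn S T) (hne : T.Nonempty)
    {s s' : Set (X × X)} (hs : s ∈ S) (hs' : s' ∈ S) {w : Set X × Set X}
    (h1 : w ∈ quotRel T s) (h2 : w ∈ quotRel T s') : quotRel T s = quotRel T s' := by
  obtain ⟨x1, x2, a, b, hw, hab, ha, hb⟩ := quotRel_elim h1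
  obtain ⟨x1', x2', a', b', hw', hab', ha', hb'⟩ := quotRel_elim h2
  rw [hw] at hw'
  have e1 : coset T x1 = coset T x1' := congrArg Prod.fst hw'
  have e2 : coset T x2 = coset T x2' := congrArg Prod.snd hw'
  apply quotRel_eq_of_near hS hT hne hs hs' hab hab'
  · exact coset_trans hS hT hne (coset_symm hS hT hne ha) (e1 ▸ ha')
  · exact coset_trans hS hT hne (coset_symm hS hT hne hb) (e2 ▸ hb')

lemma coset_eq_iff (hS : IsScheme S) (hT : IsClosedIn S T) (hne : T.Nonempty)
    {x y : X} : coset T x = coset T y ↔ y ∈ coset T x := by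
  constructor
  · intro h; rw [h]; exact mem_coset_self hS hT hne y
  · exact coset_eq_of_mem hS hT hne

lemma quotRel_diag_of_mem (hS : IsScheme S) (hT : IsClosedIn S T) (hne : T.Nonempty)
    {t : Set (X × X)} (ht : t ∈ T) : quotRel T t = quotRel T (diagRel X) := by
  obtain ⟨⟨a, b⟩, hab⟩ := scheme_nonempty hS (hT.1 ht)
  have hb : b ∈ coset T a := ⟨t, ht, hab⟩
  exact quotRel_eq_of_near hS hT hne (hT.1 ht) (diag_mem hS) hab (mem_diag a)
    (mem_coset_self hS hT hne a) (coset_symm hS hT hne hb)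

lemma mem_closed_of_quotRel_diag (hS : IsScheme S) (hT : IsClosedIn S T) (hne : T.Nonempty)
    {s : Set (X × X)} (hs : s ∈ S) (h : quotRel T s = quotRel T (diagRel X)) : s ∈ T := by
  obtain ⟨⟨a, b⟩, hab⟩ := scheme_nonempty hS hs
  have := quotRel_nonempty hS hT hne hab
  rw [h] at this
  obtain ⟨x1, x2, c, d, hw, hcd, hc, hd⟩ := quotRel_elim this
  have e1 : coset T a = coset T x1 := congrArg Prod.fst hw
  have e2 : coset T b = coset T x2 := congrArg Prod.snd hw
  have hcd' : c = d := hcd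
  have hcA : c ∈ coset T a := e1 ▸ hc
  have hdB : c ∈ coset T b := by rw [hcd']; exact e2 ▸ hd
  exact mem_closed_of_pair hS hT hs hab
    (coset_trans hS hT hne hcA (coset_symm hS hT hne hdB))

end Closed

/-! ### Lemmas about morphisms in the category 𝒞 -/

attribute [instance] BScheme.fin

section Hom

set_option linter.unusedSectionVars false

variable {A B : BScheme} (φ : HomC A B)

lemma coset_mem_cosets {X : Type} (T : Set (Set (X × X))) (x : X) :
    coset T x ∈ cosets T := ⟨x, rfl⟩

lemma UN_nonempty (hne : φ.TN.Nonempty) : φ.UN.Nonempty := by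
  have hdiag : (coset φ.TN A.base, coset φ.TN A.base) ∈ quotRel φ.TN (diagRel A.X) :=
    quotRel_nonempty A.isScheme φ.TN_cl hne (mem_diag A.base)
  obtain ⟨t', ht', hmem, -⟩ := φ.iso.1.1.2 (quotRel φ.TN (diagRel A.X))
    ⟨diagRel A.X, diag_mem A.isScheme, rfl⟩ _ hdiag _ hdiag
  obtain ⟨u, hu, rfl⟩ := ht'
  obtain ⟨x1, x2, a, b, hw, hab, ha, hb⟩ := quotRel_elim hmem
  obtain ⟨t, htmem, -⟩ := ha
  exact ⟨t, htmem⟩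

lemma f_maps_coset (x : A.X) : ∃ y, φ.f (coset φ.TN x) = coset φ.UN y := by
  have := φ.iso.1.1.1 (coset_mem_cosets φ.TN x)
  exact this

lemma elemRel_apply {t : Set (A.X × A.X)} {u : Set (B.X × B.X)}
    (h : elemRel φ t u) {w : Set A.X × Set A.X} (hw : w ∈ quotRel φ.TN t) :
    (φ.f w.1, φ.f w.2) ∈ quotRel φ.UN u := h w hw

lemma elemRel_push_pair (hne : φ.TN.Nonempty) {t : Set (A.X × A.X)}
    {u : Set (B.X × B.X)} (h : elemRel φ t u) {x1 x2 : A.X} (hx : (x1, x2) ∈ t) :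
    (φ.f (coset φ.TN x1), φ.f (coset φ.TN x2)) ∈ quotRel φ.UN u :=
  h _ (quotRel_nonempty A.isScheme φ.TN_cl hne hx)

lemma elemRel_exists (hne : φ.TN.Nonempty) {t : Set (A.X × A.X)} (ht : t ∈ A.S) :
    ∃ u ∈ B.S, elemRel φ t u := by
  obtain ⟨⟨a, b⟩, hab⟩ := scheme_nonempty A.isScheme ht
  have hw0 : (coset φ.TN a, coset φ.TN b) ∈ quotRel φ.TN t :=
    quotRel_nonempty A.isScheme φ.TN_cl hne hab
  obtain ⟨y1, hy1⟩ := f_maps_coset φ a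
  obtain ⟨y2, hy2⟩ := f_maps_coset φ b
  have hUNne : φ.UN.Nonempty := UN_nonempty φ hne
  set u := relOf B.isScheme y1 y2 with hu
  refine ⟨u, relOf_mem_S B.isScheme y1 y2, ?_⟩
  have himg0 : (φ.f (coset φ.TN a), φ.f (coset φ.TN b)) ∈ quotRel φ.UN u := by
    rw [hy1, hy2]
    exact quotRel_nonempty B.isScheme φ.UN_cl hUNne (mem_relOf B.isScheme y1 y2)
  intro w hw
  obtain ⟨t', ht', h1, h2⟩ := φ.iso.1.1.2 (quotRel φ.TN t)
    ⟨t, ht, rfl⟩ w hw _ hw0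
  obtain ⟨u', hu', rfl⟩ := ht'
  have := quotRel_eq_of_common B.isScheme φ.UN_cl hUNne hu'
    (relOf_mem_S B.isScheme y1 y2) h2 himg0
  exact this ▸ h1

lemma elemRel_unique_u (hne : φ.TN.Nonempty) {t : Set (A.X × A.X)}
    {u u' : Set (B.X × B.X)} (ht : t ∈ A.S) (hu : u ∈ B.S) (hu' : u' ∈ B.S)
    (h : elemRel φ t u) (h' : elemRel φ t u') :
    quotRel φ.UN u = quotRel φ.UN u' := by
  obtain ⟨⟨a, b⟩, hab⟩ := scheme_nonempty A.isScheme ht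
  have hw0 : (coset φ.TN a, coset φ.TN b) ∈ quotRel φ.TN t :=
    quotRel_nonempty A.isScheme φ.TN_cl hne hab
  exact quotRel_eq_of_common B.isScheme φ.UN_cl (UN_nonempty φ hne) hu hu'
    (h _ hw0) (h' _ hw0)

lemma elemRel_unique_t {t t' : Set (A.X × A.X)} {u : Set (B.X × B.X)}
    (ht : t ∈ A.S) (ht' : t' ∈ A.S) (hu : u ∈ B.S)
    (h : elemRel φ t u) (h' : elemRel φ t' u) :
    quotRel φ.TN t = quotRel φ.TN t' := by
  obtain ⟨s, -, hun⟩ := φ.iso.1.2.2 (quotRel φ.UN u) ⟨u, hu, rfl⟩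
  rw [hun (quotRel φ.TN t) ⟨⟨t, ht, rfl⟩, h⟩, hun (quotRel φ.TN t') ⟨⟨t', ht', rfl⟩, h'⟩]

lemma elemRel_congr_t {t t' : Set (A.X × A.X)} {u : Set (B.X × B.X)}
    (e : quotRel φ.TN t = quotRel φ.TN t') (h : elemRel φ t u) : elemRel φ t' u := by
  unfold elemRel elemMapsTo at *
  rw [← e]; exact h

lemma elemRel_congr_u {t : Set (A.X × A.X)} {u u' : Set (B.X × B.X)}
    (e : quotRel φ.UN u = quotRel φ.UN u') (h : elemRel φ t u) : elemRel φ t u' := by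
  unfold elemRel elemMapsTo at *
  intro w hw; rw [← e]; exact h w hw

lemma elemRel_diag (hne : φ.TN.Nonempty) :
    elemRel φ (diagRel A.X) (diagRel B.X) := by
  intro w hw
  obtain ⟨x1, x2, a, b, hw', hab, ha, hb⟩ := quotRel_elim hw
  have hab' : a = b := hab
  have e : coset φ.TN x1 = coset φ.TN x2 := by
    rw [coset_eq_of_mem A.isScheme φ.TN_cl hne ha, hab',
      ← coset_eq_of_mem A.isScheme φ.TN_cl hne hb]
  obtain ⟨y, hy⟩ := f_maps_coset φ x1
  rw [hw']
  simp only
  rw [← e, hy]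
  exact quotRel_intro (mem_diag y)
    (mem_coset_self B.isScheme φ.UN_cl (UN_nonempty φ hne) y)
    (mem_coset_self B.isScheme φ.UN_cl (UN_nonempty φ hne) y)

lemma elemRel_diag_iff_UN (hne : φ.TN.Nonempty) {u : Set (B.X × B.X)} (hu : u ∈ B.S) :
    elemRel φ (diagRel A.X) u ↔ u ∈ φ.UN := by
  constructor
  · intro h
    exact mem_closed_of_quotRel_diag B.isScheme φ.UN_cl (UN_nonempty φ hne) hu
      (elemRel_unique_u φ hne (diag_mem A.isScheme) hu (diag_mem B.isScheme) h
        (elemRel_diag φ hne))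
  · intro h
    exact elemRel_congr_u φ
      (quotRel_diag_of_mem B.isScheme φ.UN_cl (UN_nonempty φ hne) h).symm
      (elemRel_diag φ hne)

lemma elemRel_diag_iff_TN (hne : φ.TN.Nonempty) {t : Set (A.X × A.X)} (ht : t ∈ A.S) :
    elemRel φ t (diagRel B.X) ↔ t ∈ φ.TN := by
  constructor
  · intro h
    exact mem_closed_of_quotRel_diag A.isScheme φ.TN_cl hne ht
      (elemRel_unique_t φ ht (diag_mem A.isScheme) (diag_mem B.isScheme) h
        (elemRel_diag φ hne))
  · intro h
    exact elemRel_congr_t φ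
      (quotRel_diag_of_mem A.isScheme φ.TN_cl hne h).symm (elemRel_diag φ hne)

lemma elemRel_pullback (hne : φ.TN.Nonempty) {x1 x2 : A.X} {u : Set (B.X × B.X)}
    (hu : u ∈ B.S)
    (h : (φ.f (coset φ.TN x1), φ.f (coset φ.TN x2)) ∈ quotRel φ.UN u) :
    ∃ t ∈ A.S, (x1, x2) ∈ t ∧ elemRel φ t u := by
  set t := relOf A.isScheme x1 x2 with hdef
  obtain ⟨u', hu', hrel⟩ := elemRel_exists φ hne (relOf_mem_S A.isScheme x1 x2)
  have himg := elemRel_push_pair φ hne hrel (mem_relOf A.isScheme x1 x2)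
  exact ⟨t, relOf_mem_S A.isScheme x1 x2, mem_relOf A.isScheme x1 x2,
    elemRel_congr_u φ
      (quotRel_eq_of_common B.isScheme φ.UN_cl (UN_nonempty φ hne) hu' hu himg h) hrel⟩

lemma elemRel_surj {u : Set (B.X × B.X)} (hu : u ∈ B.S) :
    ∃ t ∈ A.S, elemRel φ t u := by
  obtain ⟨s, ⟨⟨t, ht, rfl⟩, hmap⟩, -⟩ := φ.iso.1.2.2 (quotRel φ.UN u) ⟨u, hu, rfl⟩
  exact ⟨t, ht, hmap⟩

lemma elemRel_transp {t : Set (A.X × A.X)} {u : Set (B.X × B.X)}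
    (h : elemRel φ t u) : elemRel φ (transp t) (transp u) := by
  intro w hw
  obtain ⟨x1, x2, a, b, hw', hab, ha, hb⟩ := quotRel_elim hw
  have : (coset φ.TN x2, coset φ.TN x1) ∈ quotRel φ.TN t :=
    quotRel_intro (mem_transp.mp hab) hb ha
  have himg := h _ this
  obtain ⟨y1, y2, c, d, he, hcd, hc, hd⟩ := quotRel_elim himg
  have e1 : φ.f (coset φ.TN x2) = coset φ.UN y1 := congrArg Prod.fst he
  have e2 : φ.f (coset φ.TN x1) = coset φ.UN y2 := congrArg Prod.snd he
  rw [hw']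
  simp only
  rw [e1, e2]
  exact quotRel_intro (mem_transp.mpr hcd) hd hc

end Hom

/-! ### Normality helpers and products of normal closed subsets -/

section Normal

set_option linter.unusedSectionVars false

variable {X : Type} [Fintype X] {S T N T1 T2 : Set (Set (X × X))}

lemma mem_setMulS_iff {P Q : Set (Set (X × X))} {r : Set (X × X)} :
    r ∈ setMulS S P Q ↔ ∃ p ∈ P, ∃ q ∈ Q, r ∈ cmulS S p q := by
  simp [setMulS]

lemma normal_flip (hS : IsScheme S) (hN : IsNormalIn S N) (hNsub : N ⊆ S)
    {p n : Set (X × X)} (hp : p ∈ S) (hn : n ∈ N) {x m y : X}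
    (h1 : (x, m) ∈ p) (h2 : (m, y) ∈ n) :
    ∃ n' ∈ N, ∃ h, (x, h) ∈ n' ∧ (h, y) ∈ p := by
  have hr : relOf hS x y ∈ setMulS S {p} N :=
    mem_setMulS_iff.mpr ⟨p, rfl, n, hn, relOf_cmul hS hp (hNsub hn) h1 h2⟩
  rw [hN p hp] at hr
  obtain ⟨n', hn', q, hq, hmem⟩ := mem_setMulS_iff.mp hr
  rw [Set.mem_singleton_iff] at hq; subst hq
  obtain ⟨h, hh1, hh2⟩ := cmul_elim hS (hNsub hn') hp hmem (mem_relOf hS x y)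
  exact ⟨n', hn', h, hh1, hh2⟩

lemma normal_flip' (hS : IsScheme S) (hN : IsNormalIn S N) (hNsub : N ⊆ S)
    {p n : Set (X × X)} (hp : p ∈ S) (hn : n ∈ N) {x m y : X}
    (h1 : (x, m) ∈ n) (h2 : (m, y) ∈ p) :
    ∃ n' ∈ N, ∃ h, (x, h) ∈ p ∧ (h, y) ∈ n' := by
  have hr : relOf hS x y ∈ setMulS S N {p} :=
    mem_setMulS_iff.mpr ⟨n, hn, p, rfl, relOf_cmul hS (hNsub hn) hp h1 h2⟩
  rw [← hN p hp] at hr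
  obtain ⟨q, hq, n', hn', hmem⟩ := mem_setMulS_iff.mp hr
  rw [Set.mem_singleton_iff] at hq; subst hq
  obtain ⟨h, hh1, hh2⟩ := cmul_elim hS hp (hNsub hn') hmem (mem_relOf hS x y)
  exact ⟨n', hn', h, hh1, hh2⟩

lemma isNormal_of_flip (hS : IsScheme S) (hTsub : T ⊆ S)
    (hTst : ∀ t ∈ T, transp t ∈ T)
    (hf : ∀ p ∈ S, ∀ t ∈ T, ∀ r, r ∈ cmulS S p t → r ∈ setMulS S T {p}) :
    IsNormalIn S T := by
  unfold IsNormalIn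
  intro p hp
  ext r
  rw [mem_setMulS_iff, mem_setMulS_iff]
  constructor
  · rintro ⟨p', hp', t, ht, hr⟩
    rw [Set.mem_singleton_iff] at hp'
    rw [hp'] at hr
    exact mem_setMulS_iff.mp (hf p hp t ht r hr)
  · rintro ⟨t, ht, p', hp', hr⟩
    rw [Set.mem_singleton_iff] at hp'
    rw [hp'] at hr
    have h1 : transp r ∈ cmulS S (transp p) (transp t) :=
      cmul_transp hS (hTsub ht) hp hr
    have h2 := hf (transp p) (transp_mem hS hp) (transp t) (hTst t ht) _ h1
    obtain ⟨t', ht', p'', hp'', hmem⟩ := mem_setMulS_iff.mp h2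
    rw [Set.mem_singleton_iff] at hp''
    rw [hp''] at hmem
    have h3 : r ∈ cmulS S (transp (transp p)) (transp t') := by
      have := cmul_transp hS (hTsub ht') (transp_mem hS hp) hmem
      rwa [transp_transp r] at this
    rw [transp_transp p] at h3
    exact ⟨p, rfl, transp t', hTst t' ht', h3⟩


lemma mul_mem_S (hS : IsScheme S) (h1cl : IsClosedIn S T1) (h2cl : IsClosedIn S T2) {n : Set (X × X)} (hn : n ∈ setMulS S T1 T2) :
    n ∈ S := by
  obtain ⟨t1, -, t2, -, hmem⟩ := mem_setMulS_iff.mp hn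
  exact hmem.1

lemma mul_elim (hS : IsScheme S) (h1cl : IsClosedIn S T1) (h2cl : IsClosedIn S T2) {n : Set (X × X)} (hn : n ∈ setMulS S T1 T2)
    {x y : X} (hxy : (x, y) ∈ n) :
    ∃ t1 ∈ T1, ∃ t2 ∈ T2, ∃ m, (x, m) ∈ t1 ∧ (m, y) ∈ t2 := by
  obtain ⟨t1, ht1, t2, ht2, hmem⟩ := mem_setMulS_iff.mp hn
  obtain ⟨m, hm1, hm2⟩ := cmul_elim hS (h1cl.1 ht1) (h2cl.1 ht2) hmem hxy
  exact ⟨t1, ht1, t2, ht2, m, hm1, hm2⟩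

lemma mul_intro (hS : IsScheme S) (h1cl : IsClosedIn S T1) (h2cl : IsClosedIn S T2) {n t1 t2 : Set (X × X)} (hn : n ∈ S)
    (ht1 : t1 ∈ T1) (ht2 : t2 ∈ T2) {x m y : X}
    (hxy : (x, y) ∈ n) (h1 : (x, m) ∈ t1) (h2 : (m, y) ∈ t2) :
    n ∈ setMulS S T1 T2 :=
  mem_setMulS_iff.mpr ⟨t1, ht1, t2, ht2,
    cmul_intro hS (h1cl.1 ht1) (h2cl.1 ht2) hn hxy h1 h2⟩

lemma mul_closed (hS : IsScheme S) (h1cl : IsClosedIn S T1) (h1n : IsNormalIn S T1) (h2cl : IsClosedIn S T2) : IsClosedIn S (setMulS S T1 T2) := by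
  constructor
  · intro n hn; exact mul_mem_S hS h1cl h2cl hn
  · intro n1 hn1 n2 hn2 s hs
    obtain ⟨⟨α, β⟩, hαβ⟩ := scheme_nonempty hS hs.1
    have htn1 : transp n1 ∈ S := transp_mem hS (mul_mem_S hS h1cl h2cl hn1)
    obtain ⟨γ, hg1, hg2⟩ := cmul_elim hS htn1 (mul_mem_S hS h1cl h2cl hn2) hs hαβ
    -- (γ, α) ∈ n1, (γ, β) ∈ n2
    obtain ⟨t1, ht1, t2, ht2, δ, hd1, hd2⟩ :=
      mul_elim hS h1cl h2cl hn1 (mem_transp.mp hg1)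
    obtain ⟨t1', ht1', t2', ht2', ε, he1, he2⟩ := mul_elim hS h1cl h2cl hn2 hg2
    -- α →(t2*) δ →(t1*) γ →(t1') ε →(t2') β
    have hδγ : (δ, γ) ∈ transp t1 := mem_transp.mpr hd1
    -- δ → ε lies in T1
    have hde : relOf hS δ ε ∈ T1 :=
      h1cl.2 t1 ht1 t1' ht1' (relOf_cmul hS (transp_mem hS (h1cl.1 ht1))
        (h1cl.1 ht1') hδγ he1)
    -- flip (α →(t2*) δ →(T1) ε) to (α →(T1) h →(t2*) ε)
    obtain ⟨n', hn', h, hh1, hh2⟩ := normal_flip hS h1n h1cl.1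
      (transp_mem hS (h2cl.1 ht2)) hde (mem_transp.mpr hd2) (mem_relOf hS δ ε)
    -- h →(t2*) ε →(t2') β lies in T2
    have hhb : relOf hS h β ∈ T2 :=
      h2cl.2 t2 ht2 t2' ht2' (relOf_cmul hS (transp_mem hS (h2cl.1 ht2))
        (h2cl.1 ht2') hh2 he2)
    exact mul_intro hS h1cl h2cl hs.1 hn' hhb hαβ hh1 (mem_relOf hS h β)

lemma mul_transp_mem (hS : IsScheme S) (h1cl : IsClosedIn S T1) (h1n : IsNormalIn S T1) (h1ne : T1.Nonempty) (h2cl : IsClosedIn S T2) (h2ne : T2.Nonempty) {n : Set (X × X)} (hn : n ∈ setMulS S T1 T2) :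
    transp n ∈ setMulS S T1 T2 := by
  obtain ⟨t, ht⟩ := h1ne
  obtain ⟨⟨a, b⟩, hab⟩ := scheme_nonempty hS (h1cl.1 ht)
  have hdiag : diagRel X ∈ setMulS S T1 T2 :=
    mul_intro hS h1cl h2cl (diag_mem hS)
      (diag_mem_closed hS h1cl ⟨t, ht⟩) (diag_mem_closed hS h2cl h2ne)
      (mem_diag a) (mem_diag a) (mem_diag a)
  exact transp_mem_closed hS (mul_closed hS h1cl h1n h2cl) ⟨diagRel X, hdiag⟩ hn

lemma mul_normal (hS : IsScheme S) (h1cl : IsClosedIn S T1) (h1n : IsNormalIn S T1) (h1ne : T1.Nonempty) (h2cl : IsClosedIn S T2) (h2n : IsNormalIn S T2) (h2ne : T2.Nonempty) : IsNormalIn S (setMulS S T1 T2) := by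
  apply isNormal_of_flip hS (fun n hn => mul_mem_S hS h1cl h2cl hn)
    (fun n hn => mul_transp_mem hS h1cl h1n h1ne h2cl h2ne hn)
  intro p hp n hn r hr
  obtain ⟨⟨α, β⟩, hαβ⟩ := scheme_nonempty hS hr.1
  obtain ⟨γ, hg1, hg2⟩ := cmul_elim hS hp (mul_mem_S hS h1cl h2cl hn) hr hαβ
  obtain ⟨t1, ht1, t2, ht2, δ, hd1, hd2⟩ := mul_elim hS h1cl h2cl hn hg2
  -- α →(p) γ →(t1) δ →(t2) β
  obtain ⟨t1', ht1', ε, he1, he2⟩ := normal_flip hS h1n h1cl.1 hp ht1 hg1 hd1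
  -- α →(t1') ε →(p) δ →(t2) β
  obtain ⟨t2', ht2', ζ, hz1, hz2⟩ := normal_flip hS h2n h2cl.1 hp ht2 he2 hd2
  -- α →(t1') ε →(t2') ζ →(p) β
  have hmem : relOf hS α ζ ∈ setMulS S T1 T2 :=
    mul_intro hS h1cl h2cl (relOf_mem_S hS α ζ) ht1' ht2' (mem_relOf hS α ζ) he1 hz1
  exact mem_setMulS_iff.mpr ⟨relOf hS α ζ, hmem, p, rfl,
    cmul_intro hS (mul_mem_S hS h1cl h2cl hmem) hp hr.1 hαβ (mem_relOf hS α ζ) hz2⟩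

end Normal

/-! ### The composite subsets `Tcomp` and `Vcomp` -/

section Hom2

set_option linter.unusedSectionVars false

variable {A B : BScheme} (φ : HomC A B)

lemma elemRel_mult (hne : φ.TN.Nonempty) {p q r : Set (A.X × A.X)}
    {up uq : Set (B.X × B.X)}
    (hp : p ∈ A.S) (hq : q ∈ A.S) (hup : up ∈ B.S) (huq : uq ∈ B.S)
    (h1 : elemRel φ p up) (h2 : elemRel φ q uq) (hr : r ∈ cmulS A.S p q) :
    ∃ ur ∈ B.S, elemRel φ r ur ∧
      ∃ b a a' b2, (b, a) ∈ up ∧ a' ∈ coset φ.UN a ∧ (a', b2) ∈ uq ∧ (b, b2) ∈ ur := by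
  have hUNne := UN_nonempty φ hne
  obtain ⟨⟨x1, x2⟩, hx⟩ := scheme_nonempty A.isScheme hr.1
  obtain ⟨z, hxz, hzx2⟩ := cmul_elim A.isScheme hp hq hr hx
  have hi1 := elemRel_push_pair φ hne h1 hxz
  have hi2 := elemRel_push_pair φ hne h2 hzx2
  obtain ⟨y1, yz, b, a, he1, hba, hb, ha⟩ := quotRel_elim hi1
  obtain ⟨yz', y2, a', b2, he2, hab2, ha', hb2⟩ := quotRel_elim hi2
  have ez1 : φ.f (coset φ.TN z) = coset φ.UN yz := congrArg Prod.snd he1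
  have ez2 : φ.f (coset φ.TN z) = coset φ.UN yz' := congrArg Prod.fst he2
  have haa' : a' ∈ coset φ.UN a := by
    have : a' ∈ coset φ.UN yz := by rw [← ez1, ez2]; exact ha'
    rwa [coset_eq_of_mem B.isScheme φ.UN_cl hUNne ha] at this
  set ur := relOf B.isScheme b b2 with hurdef
  have hurS : ur ∈ B.S := relOf_mem_S B.isScheme b b2
  have himg : (φ.f (coset φ.TN x1), φ.f (coset φ.TN x2)) ∈ quotRel φ.UN ur := by
    have e1 : φ.f (coset φ.TN x1) = coset φ.UN y1 := congrArg Prod.fst he1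
    have e2 : φ.f (coset φ.TN x2) = coset φ.UN y2 := congrArg Prod.snd he2
    rw [e1, e2]
    exact quotRel_intro (mem_relOf B.isScheme b b2) hb hb2
  obtain ⟨t, htS, hxt, hrel⟩ := elemRel_pullback φ hne hurS himg
  have : t = r := rel_eq_of_mem A.isScheme htS hr.1 hxt hx
  exact ⟨ur, hurS, this ▸ hrel, b, a, a', b2, hba, haa', hab2, mem_relOf B.isScheme b b2⟩

end Hom2

section Comp

set_option linter.unusedSectionVars false

variable {A B C : BScheme} (phi : HomC A B) (psi : HomC B C)

lemma Tcomp_iff (hψ : psi.TN.Nonempty) {t : Set (A.X × A.X)} :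
    t ∈ Tcomp phi psi ↔ t ∈ A.S ∧ ∃ u ∈ psi.TN, elemRel phi t u := by
  constructor
  · rintro ⟨htS, u, huS, h1, h2⟩
    exact ⟨htS, u, (elemRel_diag_iff_TN psi hψ huS).mp h2, h1⟩
  · rintro ⟨htS, u, huT, h1⟩
    exact ⟨htS, u, psi.TN_cl.1 huT, h1,
      (elemRel_diag_iff_TN psi hψ (psi.TN_cl.1 huT)).mpr huT⟩

lemma Vcomp_iff (hφ : phi.TN.Nonempty) {v : Set (C.X × C.X)} :
    v ∈ Vcomp phi psi ↔ v ∈ C.S ∧ ∃ u ∈ phi.UN, elemRel psi u v := by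
  constructor
  · rintro ⟨hvS, u, huS, h1, h2⟩
    exact ⟨hvS, u, (elemRel_diag_iff_UN phi hφ huS).mp h1, h2⟩
  · rintro ⟨hvS, u, huU, h2⟩
    exact ⟨hvS, u, phi.UN_cl.1 huU,
      (elemRel_diag_iff_UN phi hφ (phi.UN_cl.1 huU)).mpr huU, h2⟩

lemma Tcomp_sub : Tcomp phi psi ⊆ A.S := fun _ h => h.1

lemma Vcomp_sub : Vcomp phi psi ⊆ C.S := fun _ h => h.1

lemma TN_sub_Tcomp (hψ : psi.TN.Nonempty) : phi.TN ⊆ Tcomp phi psi := by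
  intro t ht
  refine (Tcomp_iff phi psi hψ).mpr ⟨phi.TN_cl.1 ht, diagRel B.X,
    diag_mem_closed B.isScheme psi.TN_cl hψ, ?_⟩
  have hne : phi.TN.Nonempty := ⟨t, ht⟩
  exact (elemRel_diag_iff_TN phi hne (phi.TN_cl.1 ht)).mpr ht

lemma VN_sub_Vcomp' (hφ : phi.TN.Nonempty) (hψ : psi.TN.Nonempty) :
    psi.UN ⊆ Vcomp phi psi := by
  intro v hv
  exact (Vcomp_iff phi psi hφ).mpr ⟨psi.UN_cl.1 hv, diagRel B.X,
    diag_mem_closed B.isScheme phi.UN_cl (UN_nonempty phi hφ),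
    (elemRel_diag_iff_UN psi hψ (psi.UN_cl.1 hv)).mpr hv⟩

lemma Tcomp_nonempty (hφ : phi.TN.Nonempty) (hψ : psi.TN.Nonempty) :
    (Tcomp phi psi).Nonempty :=
  ⟨diagRel A.X, TN_sub_Tcomp phi psi hψ (diag_mem_closed A.isScheme phi.TN_cl hφ)⟩

lemma Vcomp_nonempty (hφ : phi.TN.Nonempty) (hψ : psi.TN.Nonempty) :
    (Vcomp phi psi).Nonempty :=
  ⟨diagRel C.X, VN_sub_Vcomp' phi psi hφ hψ
    (diag_mem_closed C.isScheme psi.UN_cl (UN_nonempty psi hψ))⟩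

lemma Tcomp_closed (hφ : phi.TN.Nonempty) (hψ : psi.TN.Nonempty) :
    IsClosedIn A.S (Tcomp phi psi) := by
  refine ⟨Tcomp_sub phi psi, ?_⟩
  intro p hp q hq r hr
  have hUNne := UN_nonempty phi hφ
  obtain ⟨hpS, up, hupT, hup⟩ := (Tcomp_iff phi psi hψ).mp hp
  obtain ⟨hqS, uq, huqT, huq⟩ := (Tcomp_iff phi psi hψ).mp hq
  have hupS : up ∈ B.S := psi.TN_cl.1 hupT
  have huqS : uq ∈ B.S := psi.TN_cl.1 huqT
  obtain ⟨ur, hurS, hur, b, a, a', b2, hba, haa', hab2, hbb2⟩ :=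
    elemRel_mult phi hφ (transp_mem A.isScheme hpS) hqS
      (transp_mem B.isScheme hupS) huqS (elemRel_transp phi hup) huq hr
  obtain ⟨tB, htB, haa'2⟩ := haa'
  obtain ⟨t', ht', h, hbh, hha'⟩ := normal_flip B.isScheme phi.UN_n phi.UN_cl.1
    (transp_mem B.isScheme hupS) htB hba haa'2
  have hu'' : relOf B.isScheme h b2 ∈ psi.TN :=
    psi.TN_cl.2 up hupT uq huqT
      (relOf_cmul B.isScheme (transp_mem B.isScheme hupS) huqS hha' hab2)
  have hnear : quotRel phi.UN ur = quotRel phi.UN (relOf B.isScheme h b2) :=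
    quotRel_eq_of_near B.isScheme phi.UN_cl hUNne hurS
      (relOf_mem_S B.isScheme h b2) hbb2 (mem_relOf B.isScheme h b2)
      ⟨t', ht', hbh⟩ (mem_coset_self B.isScheme phi.UN_cl hUNne b2)
  exact (Tcomp_iff phi psi hψ).mpr ⟨hr.1, relOf B.isScheme h b2, hu'',
    elemRel_congr_u phi hnear hur⟩

end Comp

section Hom3

set_option linter.unusedSectionVars false

variable {A B : BScheme} (φ : HomC A B)

lemma f_surj_coset {D : Set B.X} (hD : D ∈ cosets φ.UN) :
    ∃ x, φ.f (coset φ.TN x) = D := by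
  obtain ⟨P, hP, hfP⟩ := φ.iso.1.2.1.2.2 hD
  obtain ⟨x, rfl⟩ := hP
  exact ⟨x, hfP⟩

end Hom3

section Comp2

set_option linter.unusedSectionVars false

variable {A B C : BScheme} (phi : HomC A B) (psi : HomC B C)

lemma Tcomp_normal (hφ : phi.TN.Nonempty) (hψ : psi.TN.Nonempty) :
    IsNormalIn A.S (Tcomp phi psi) := by
  have hUNne := UN_nonempty phi hφ
  have hTccl := Tcomp_closed phi psi hφ hψ
  have hTcne := Tcomp_nonempty phi psi hφ hψ
  have hMn := mul_normal B.isScheme phi.UN_cl phi.UN_n hUNne psi.TN_cl psi.TN_n hψ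
  apply isNormal_of_flip A.isScheme (Tcomp_sub phi psi)
    (fun t ht => transp_mem_closed A.isScheme hTccl hTcne ht)
  intro p hp t ht r hr
  obtain ⟨htS, ut, hutT, hut⟩ := (Tcomp_iff phi psi hψ).mp ht
  obtain ⟨up, hupS, hup⟩ := elemRel_exists phi hφ hp
  obtain ⟨⟨x, y⟩, hxy⟩ := scheme_nonempty A.isScheme hr.1
  obtain ⟨z, hxz, hzy⟩ := cmul_elim A.isScheme hp htS hr hxy
  have h1 := elemRel_push_pair phi hφ hup hxz
  have h2 := elemRel_push_pair phi hφ hut hzy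
  obtain ⟨y1, yz, b, e, he1, hbe, hb, heyz⟩ := quotRel_elim h1
  obtain ⟨yz', y2, e', d, he2, hed, he', hd⟩ := quotRel_elim h2
  have ex1 : phi.f (coset phi.TN x) = coset phi.UN y1 := congrArg Prod.fst he1
  have ez1 : phi.f (coset phi.TN z) = coset phi.UN yz := congrArg Prod.snd he1
  have ez2 : phi.f (coset phi.TN z) = coset phi.UN yz' := congrArg Prod.fst he2
  have ey2 : phi.f (coset phi.TN y) = coset phi.UN y2 := congrArg Prod.snd he2
  have hee' : e' ∈ coset phi.UN e := by
    have h : e' ∈ coset phi.UN yz := by rw [← ez1, ez2]; exact he'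
    rwa [coset_eq_of_mem B.isScheme phi.UN_cl hUNne heyz] at h
  have htBmem : relOf B.isScheme e e' ∈ phi.UN :=
    mem_closed_of_pair B.isScheme phi.UN_cl (relOf_mem_S _ e e') (mem_relOf _ e e') hee'
  have hnM : relOf B.isScheme e d ∈ setMulS B.S phi.UN psi.TN :=
    mul_intro B.isScheme phi.UN_cl psi.TN_cl (relOf_mem_S _ e d) htBmem hutT
      (mem_relOf _ e d) (mem_relOf _ e e') hed
  obtain ⟨n', hn'M, g, hbg, hgd⟩ := normal_flip B.isScheme hMn
    (fun _ hh => mul_mem_S B.isScheme phi.UN_cl psi.TN_cl hh) hupS hnM hbe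
    (mem_relOf _ e d)
  obtain ⟨t₁, ht₁U, u₁, hu₁T, c1, hbc1, hc1g⟩ :=
    mul_elim B.isScheme phi.UN_cl psi.TN_cl hn'M hbg
  obtain ⟨w, hfw⟩ := f_surj_coset phi (coset_mem_cosets phi.UN g)
  have himg1 : (phi.f (coset phi.TN x), phi.f (coset phi.TN w)) ∈ quotRel phi.UN u₁ := by
    rw [ex1, hfw]
    exact quotRel_intro hc1g
      (coset_trans B.isScheme phi.UN_cl hUNne hb ⟨t₁, ht₁U, hbc1⟩)
      (mem_coset_self B.isScheme phi.UN_cl hUNne g)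
  obtain ⟨t₂, ht₂S, hxw, hrel₂⟩ := elemRel_pullback phi hφ (psi.TN_cl.1 hu₁T) himg1
  have himg2 : (phi.f (coset phi.TN w), phi.f (coset phi.TN y)) ∈ quotRel phi.UN up := by
    rw [hfw, ey2]
    exact quotRel_intro hgd (mem_coset_self B.isScheme phi.UN_cl hUNne g) hd
  obtain ⟨p₂, hp₂S, hwy, hrelp₂⟩ := elemRel_pullback phi hφ hupS himg2
  have hqq : quotRel phi.TN p₂ = quotRel phi.TN p :=
    elemRel_unique_t phi hp₂S hp hupS hrelp₂ hup
  have hwy' : (coset phi.TN w, coset phi.TN y) ∈ quotRel phi.TN p := by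
    rw [← hqq]; exact quotRel_nonempty A.isScheme phi.TN_cl hφ hwy
  obtain ⟨w', y', k1, k2, heq, hk, hk1, hk2⟩ := quotRel_elim hwy'
  have ew : coset phi.TN w = coset phi.TN w' := congrArg Prod.fst heq
  have ey : coset phi.TN y = coset phi.TN y' := congrArg Prod.snd heq
  have hk1w : k1 ∈ coset phi.TN w := by rw [ew]; exact hk1
  have hk2y : k2 ∈ coset phi.TN y := by rw [ey]; exact hk2
  have ht₃eq : quotRel phi.TN (relOf A.isScheme x k1) = quotRel phi.TN t₂ :=
    quotRel_eq_of_near A.isScheme phi.TN_cl hφ (relOf_mem_S _ x k1) ht₂S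
      (mem_relOf _ x k1) hxw (mem_coset_self A.isScheme phi.TN_cl hφ x)
      (coset_symm A.isScheme phi.TN_cl hφ hk1w)
  have hrel₃ : elemRel phi (relOf A.isScheme x k1) u₁ :=
    elemRel_congr_t phi ht₃eq.symm hrel₂
  obtain ⟨τ, hτ, hk2y''⟩ := coset_symm A.isScheme phi.TN_cl hφ hk2y
  obtain ⟨τ₃, hτ₃, h, hk1h, hhy⟩ :=
    normal_flip A.isScheme phi.TN_n phi.TN_cl.1 hp hτ hk hk2y''
  have ht₄eq : quotRel phi.TN (relOf A.isScheme x h) =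
      quotRel phi.TN (relOf A.isScheme x k1) :=
    quotRel_eq_of_near A.isScheme phi.TN_cl hφ (relOf_mem_S _ x h) (relOf_mem_S _ x k1)
      (mem_relOf _ x h) (mem_relOf _ x k1) (mem_coset_self A.isScheme phi.TN_cl hφ x)
      (coset_symm A.isScheme phi.TN_cl hφ ⟨τ₃, hτ₃, hk1h⟩)
  have ht₄Tc : relOf A.isScheme x h ∈ Tcomp phi psi :=
    (Tcomp_iff phi psi hψ).mpr ⟨relOf_mem_S _ x h, u₁, hu₁T,
      elemRel_congr_t phi ht₄eq.symm hrel₃⟩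
  exact mem_setMulS_iff.mpr ⟨relOf A.isScheme x h, ht₄Tc, p, rfl,
    cmul_intro A.isScheme (relOf_mem_S _ x h) hp hr.1 hxy (mem_relOf _ x h) hhy⟩

lemma Vcomp_closed (hφ : phi.TN.Nonempty) (hψ : psi.TN.Nonempty) :
    IsClosedIn C.S (Vcomp phi psi) := by
  refine ⟨Vcomp_sub phi psi, ?_⟩
  intro v hv v' hv' w hw
  have hVne := UN_nonempty psi hψ
  obtain ⟨hvS, u, huU, hu⟩ := (Vcomp_iff phi psi hφ).mp hv
  obtain ⟨hv'S, u', hu'U, hu'⟩ := (Vcomp_iff phi psi hφ).mp hv'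
  obtain ⟨⟨γ1, γ2⟩, hγ⟩ := scheme_nonempty C.isScheme hw.1
  obtain ⟨γ3, hg1, hg2⟩ := cmul_elim C.isScheme (transp_mem C.isScheme hvS) hv'S hw hγ
  have hg1' : (γ3, γ1) ∈ v := mem_transp.mp hg1
  obtain ⟨e3, hE3⟩ := f_surj_coset psi (coset_mem_cosets psi.UN γ3)
  obtain ⟨e1, hE1⟩ := f_surj_coset psi (coset_mem_cosets psi.UN γ1)
  obtain ⟨e2, hE2⟩ := f_surj_coset psi (coset_mem_cosets psi.UN γ2)
  have him1 : (psi.f (coset psi.TN e3), psi.f (coset psi.TN e1)) ∈ quotRel psi.UN v := by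
    rw [hE3, hE1]
    exact quotRel_nonempty C.isScheme psi.UN_cl hVne hg1'
  have him2 : (psi.f (coset psi.TN e3), psi.f (coset psi.TN e2)) ∈ quotRel psi.UN v' := by
    rw [hE3, hE2]
    exact quotRel_nonempty C.isScheme psi.UN_cl hVne hg2
  obtain ⟨m1, hm1S, he31, hrelm1⟩ := elemRel_pullback psi hψ hvS him1
  obtain ⟨m2, hm2S, he32, hrelm2⟩ := elemRel_pullback psi hψ hv'S him2
  have h1 : quotRel psi.TN m1 = quotRel psi.TN u :=
    elemRel_unique_t psi hm1S (phi.UN_cl.1 huU) hvS hrelm1 hu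
  have h2 : quotRel psi.TN m2 = quotRel psi.TN u' :=
    elemRel_unique_t psi hm2S (phi.UN_cl.1 hu'U) hv'S hrelm2 hu'
  have hpair1 : (coset psi.TN e3, coset psi.TN e1) ∈ quotRel psi.TN u := by
    rw [← h1]; exact quotRel_nonempty B.isScheme psi.TN_cl hψ he31
  have hpair2 : (coset psi.TN e3, coset psi.TN e2) ∈ quotRel psi.TN u' := by
    rw [← h2]; exact quotRel_nonempty B.isScheme psi.TN_cl hψ he32
  obtain ⟨a1, a2, c3, c1, heqA, hcu, hc3, hc1⟩ := quotRel_elim hpair1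
  obtain ⟨b1, b2, c3', c2, heqB, hcu', hc3', hc2⟩ := quotRel_elim hpair2
  have eA1 : coset psi.TN e3 = coset psi.TN a1 := congrArg Prod.fst heqA
  have eA2 : coset psi.TN e1 = coset psi.TN a2 := congrArg Prod.snd heqA
  have eB1 : coset psi.TN e3 = coset psi.TN b1 := congrArg Prod.fst heqB
  have eB2 : coset psi.TN e2 = coset psi.TN b2 := congrArg Prod.snd heqB
  have hc3e : c3 ∈ coset psi.TN e3 := by rw [eA1]; exact hc3
  have hc1e : c1 ∈ coset psi.TN e1 := by rw [eA2]; exact hc1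
  have hc3'e : c3' ∈ coset psi.TN e3 := by rw [eB1]; exact hc3'
  have hc2e : c2 ∈ coset psi.TN e2 := by rw [eB2]; exact hc2
  have hc3c3' : c3' ∈ coset psi.TN c3 := by
    rw [← coset_eq_of_mem B.isScheme psi.TN_cl hψ hc3e]; exact hc3'e
  have hq₂ : relOf B.isScheme c3 c3' ∈ psi.TN :=
    mem_closed_of_pair B.isScheme psi.TN_cl (relOf_mem_S _ c3 c3')
      (mem_relOf _ c3 c3') hc3c3'
  obtain ⟨q₃, hq₃, h, hc1h, hhc3'⟩ := normal_flip B.isScheme psi.TN_n psi.TN_cl.1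
    (transp_mem B.isScheme (phi.UN_cl.1 huU)) hq₂ (mem_transp.mpr hcu)
    (mem_relOf _ c3 c3')
  have hu'' : relOf B.isScheme h c2 ∈ phi.UN :=
    phi.UN_cl.2 u huU u' hu'U
      (relOf_cmul B.isScheme (transp_mem B.isScheme (phi.UN_cl.1 huU))
        (phi.UN_cl.1 hu'U) hhc3' hcu')
  obtain ⟨v'', hv''S, hrel''⟩ := elemRel_exists psi hψ (relOf_mem_S B.isScheme h c2)
  have himgp := elemRel_push_pair psi hψ hrel'' (mem_relOf B.isScheme h c2)
  have e1h : coset psi.TN e1 = coset psi.TN h :=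
    coset_eq_of_mem B.isScheme psi.TN_cl hψ
      (coset_trans B.isScheme psi.TN_cl hψ hc1e ⟨q₃, hq₃, hc1h⟩)
  have e2c2 : coset psi.TN e2 = coset psi.TN c2 :=
    coset_eq_of_mem B.isScheme psi.TN_cl hψ hc2e
  have hvv'' : (coset psi.UN γ1, coset psi.UN γ2) ∈ quotRel psi.UN v'' := by
    rw [← hE1, ← hE2, e1h, e2c2]; exact himgp
  have hcommon : (coset psi.UN γ1, coset psi.UN γ2) ∈ quotRel psi.UN w :=
    quotRel_nonempty C.isScheme psi.UN_cl hVne hγ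
  have heqv : quotRel psi.UN v'' = quotRel psi.UN w :=
    quotRel_eq_of_common C.isScheme psi.UN_cl hVne hv''S hw.1 hvv'' hcommon
  exact (Vcomp_iff phi psi hφ).mpr ⟨hw.1, relOf B.isScheme h c2, hu'',
    elemRel_congr_u psi heqv hrel''⟩

end Comp2

section Comp3

set_option linter.unusedSectionVars false

variable {A B C : BScheme} (phi : HomC A B) (psi : HomC B C)

lemma Vcomp_normal (hφ : phi.TN.Nonempty) (hψ : psi.TN.Nonempty) :
    IsNormalIn C.S (Vcomp phi psi) := by
  have hUφne := UN_nonempty phi hφ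
  have hVne := UN_nonempty psi hψ
  have hVccl := Vcomp_closed phi psi hφ hψ
  have hVcne := Vcomp_nonempty phi psi hφ hψ
  have hM'n := mul_normal B.isScheme psi.TN_cl psi.TN_n hψ phi.UN_cl phi.UN_n hUφne
  apply isNormal_of_flip C.isScheme (Vcomp_sub phi psi)
    (fun v hv => transp_mem_closed C.isScheme hVccl hVcne hv)
  intro p hp v hv w hw
  obtain ⟨hvS, uv, huvU, huv⟩ := (Vcomp_iff phi psi hφ).mp hv
  obtain ⟨⟨γ1, γ2⟩, hγ⟩ := scheme_nonempty C.isScheme hw.1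
  obtain ⟨γ3, hg1, hg2⟩ := cmul_elim C.isScheme hp hvS hw hγ
  obtain ⟨e1, hE1⟩ := f_surj_coset psi (coset_mem_cosets psi.UN γ1)
  obtain ⟨e3, hE3⟩ := f_surj_coset psi (coset_mem_cosets psi.UN γ3)
  obtain ⟨e2, hE2⟩ := f_surj_coset psi (coset_mem_cosets psi.UN γ2)
  have him1 : (psi.f (coset psi.TN e1), psi.f (coset psi.TN e3)) ∈ quotRel psi.UN p := by
    rw [hE1, hE3]; exact quotRel_nonempty C.isScheme psi.UN_cl hVne hg1
  have him2 : (psi.f (coset psi.TN e3), psi.f (coset psi.TN e2)) ∈ quotRel psi.UN v := by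
    rw [hE3, hE2]; exact quotRel_nonempty C.isScheme psi.UN_cl hVne hg2
  obtain ⟨mp, hmpS, he13, hrelmp⟩ := elemRel_pullback psi hψ hp him1
  obtain ⟨mv, hmvS, he32, hrelmv⟩ := elemRel_pullback psi hψ hvS him2
  have h2 : quotRel psi.TN mv = quotRel psi.TN uv :=
    elemRel_unique_t psi hmvS (phi.UN_cl.1 huvU) hvS hrelmv huv
  have hpair : (coset psi.TN e3, coset psi.TN e2) ∈ quotRel psi.TN uv := by
    rw [← h2]; exact quotRel_nonempty B.isScheme psi.TN_cl hψ he32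
  obtain ⟨a1, a2, c3, c2, heqA, hcu, hc3, hc2⟩ := quotRel_elim hpair
  have eA1 : coset psi.TN e3 = coset psi.TN a1 := congrArg Prod.fst heqA
  have eA2 : coset psi.TN e2 = coset psi.TN a2 := congrArg Prod.snd heqA
  have hc3e : c3 ∈ coset psi.TN e3 := by rw [eA1]; exact hc3
  have hc2e : c2 ∈ coset psi.TN e2 := by rw [eA2]; exact hc2
  have hq : relOf B.isScheme e3 c3 ∈ psi.TN :=
    mem_closed_of_pair B.isScheme psi.TN_cl (relOf_mem_S _ e3 c3)
      (mem_relOf _ e3 c3) hc3e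
  have hnM' : relOf B.isScheme e3 c2 ∈ setMulS B.S psi.TN phi.UN :=
    mul_intro B.isScheme psi.TN_cl phi.UN_cl (relOf_mem_S _ e3 c2) hq huvU
      (mem_relOf _ e3 c2) (mem_relOf _ e3 c3) hcu
  obtain ⟨n', hn'M', g, heg, hgc2⟩ := normal_flip B.isScheme hM'n
    (fun _ hh => mul_mem_S B.isScheme psi.TN_cl phi.UN_cl hh) hmpS hnM' he13
    (mem_relOf _ e3 c2)
  obtain ⟨q₁, hq₁T, t₁, ht₁U, k, hek, hkg⟩ :=
    mul_elim B.isScheme psi.TN_cl phi.UN_cl hn'M' heg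
  obtain ⟨v₁, hv₁S, hrelv₁⟩ := elemRel_exists psi hψ (relOf_mem_S B.isScheme k g)
  have hv₁Vc : v₁ ∈ Vcomp phi psi := by
    refine (Vcomp_iff phi psi hφ).mpr ⟨hv₁S, relOf B.isScheme k g, ?_, hrelv₁⟩
    exact mem_closed_of_pair B.isScheme phi.UN_cl (relOf_mem_S _ k g)
      (mem_relOf _ k g) ⟨t₁, ht₁U, hkg⟩
  have hpush1 := elemRel_push_pair psi hψ hrelv₁ (mem_relOf B.isScheme k g)
  have hpush2 := elemRel_push_pair psi hψ hrelmp hgc2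
  have ek : coset psi.TN e1 = coset psi.TN k :=
    coset_eq_of_mem B.isScheme psi.TN_cl hψ ⟨q₁, hq₁T, hek⟩
  have ec2 : coset psi.TN e2 = coset psi.TN c2 :=
    coset_eq_of_mem B.isScheme psi.TN_cl hψ hc2e
  -- rewrite the pushed images in terms of γ's
  rw [← ek, hE1] at hpush1
  rw [← ec2, hE2] at hpush2
  -- extract points in C
  obtain ⟨δ1, δ2, d1, d3, heq1, hd13, hd1, hd3⟩ := quotRel_elim hpush1
  obtain ⟨δ3, δ4, d3', d4, heq2, hd34, hd3', hd4⟩ := quotRel_elim hpush2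
  have f1 : coset psi.UN γ1 = coset psi.UN δ1 := congrArg Prod.fst heq1
  have f2 : psi.f (coset psi.TN g) = coset psi.UN δ2 := congrArg Prod.snd heq1
  have f3 : psi.f (coset psi.TN g) = coset psi.UN δ3 := congrArg Prod.fst heq2
  have f4 : coset psi.UN γ2 = coset psi.UN δ4 := congrArg Prod.snd heq2
  have hd1γ : d1 ∈ coset psi.UN γ1 := by rw [f1]; exact hd1
  have hd4γ : d4 ∈ coset psi.UN γ2 := by rw [f4]; exact hd4
  have hd3'd3 : d3' ∈ coset psi.UN d3 := by
    have h1 : d3' ∈ coset psi.UN δ2 := by rw [← f2, f3]; exact hd3'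
    rwa [coset_eq_of_mem C.isScheme psi.UN_cl hVne hd3] at h1
  -- chain in C: γ1 →(Vψ) d1 →(v₁ ∈ Vc) d3 →(Vψ) d3' →(p) d4 →(Vψ) γ2
  have hVψsubVc := VN_sub_Vcomp' phi psi hφ hψ
  have hs1 : relOf C.isScheme γ1 d1 ∈ Vcomp phi psi :=
    hVψsubVc (mem_closed_of_pair C.isScheme psi.UN_cl (relOf_mem_S _ γ1 d1)
      (mem_relOf _ γ1 d1) hd1γ)
  have hv₂ : relOf C.isScheme γ1 d3 ∈ Vcomp phi psi :=
    cmul_closed C.isScheme hVccl hVcne hs1 hv₁Vc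
      (relOf_cmul C.isScheme (Vcomp_sub phi psi hs1) hv₁S (mem_relOf _ γ1 d1) hd13)
  have hs2 : relOf C.isScheme d3 d3' ∈ Vcomp phi psi :=
    hVψsubVc (mem_closed_of_pair C.isScheme psi.UN_cl (relOf_mem_S _ d3 d3')
      (mem_relOf _ d3 d3') hd3'd3)
  have hv₃ : relOf C.isScheme γ1 d3' ∈ Vcomp phi psi :=
    cmul_closed C.isScheme hVccl hVcne hv₂ hs2
      (relOf_cmul C.isScheme (Vcomp_sub phi psi hv₂) (Vcomp_sub phi psi hs2)
        (mem_relOf _ γ1 d3) (mem_relOf _ d3 d3'))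
  obtain ⟨τ, hτ, hd4γ'⟩ := coset_symm C.isScheme psi.UN_cl hVne hd4γ
  obtain ⟨τ', hτ', h, hd3'h, hhγ2⟩ :=
    normal_flip C.isScheme psi.UN_n psi.UN_cl.1 hp hτ hd34 hd4γ'
  have hv₄ : relOf C.isScheme γ1 h ∈ Vcomp phi psi :=
    cmul_closed C.isScheme hVccl hVcne hv₃ (hVψsubVc hτ')
      (relOf_cmul C.isScheme (Vcomp_sub phi psi hv₃) (psi.UN_cl.1 hτ')
        (mem_relOf _ γ1 d3') hd3'h)
  exact mem_setMulS_iff.mpr ⟨relOf C.isScheme γ1 h, hv₄, p, rfl,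
    cmul_intro C.isScheme (relOf_mem_S _ γ1 h) hp hw.1 hγ (mem_relOf _ γ1 h) hhγ2⟩

end Comp3

section Helpers

set_option linter.unusedSectionVars false

lemma coset_sub {X : Type} {T T' : Set (Set (X × X))} (h : T ⊆ T') (x : X) :
    coset T x ⊆ coset T' x := fun _ ⟨t, ht, hm⟩ => ⟨t, h ht, hm⟩

lemma pair_near_of_quotRel_eq {X : Type} [Fintype X] {S T : Set (Set (X × X))}
    (hS : IsScheme S) (hT : IsClosedIn S T) (hne : T.Nonempty)
    {s s' : Set (X × X)} {a b : X}
    (he : quotRel T s = quotRel T s') (hab : (a, b) ∈ s) :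
    ∃ a' b', (a', b') ∈ s' ∧ a' ∈ coset T a ∧ b' ∈ coset T b := by
  have h0 : (coset T a, coset T b) ∈ quotRel T s' := by
    rw [← he]; exact quotRel_nonempty hS hT hne hab
  obtain ⟨x1, x2, a', b', heq, hab', ha', hb'⟩ := quotRel_elim h0
  have e1 : coset T a = coset T x1 := congrArg Prod.fst heq
  have e2 : coset T b = coset T x2 := congrArg Prod.snd heq
  exact ⟨a', b', hab', by rw [e1]; exact ha', by rw [e2]; exact hb'⟩

end Helpers

section GMap

set_option linter.unusedSectionVars false

variable {A B C : BScheme} (phi : HomC A B) (psi : HomC B C)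

/-- A representative `y` with `φ.f (xT_φ) = yU_φ`. -/
noncomputable def yOf (x : A.X) : B.X := (f_maps_coset phi x).choose

lemma yOf_spec (x : A.X) : phi.f (coset phi.TN x) = coset phi.UN (yOf phi x) :=
  (f_maps_coset phi x).choose_spec

/-- A representative `z` with `ψ.f ((yOf x)U_ψ) = zV_ψ`. -/
noncomputable def zOf (x : A.X) : C.X := (f_maps_coset psi (yOf phi x)).choose

lemma zOf_spec (x : A.X) :
    psi.f (coset psi.TN (yOf phi x)) = coset psi.UN (zOf phi psi x) :=
  (f_maps_coset psi (yOf phi x)).choose_spec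

/-- Transporting along `ψ`: if `y' ∈ yU_φ` and `ψ̃` sends the respective
`U_ψ`-cosets to `zV_ψ` and `z'V_ψ`, then `z' ∈ z V_{φψ}`. -/
lemma z_near (hφ : phi.TN.Nonempty) (hψ : psi.TN.Nonempty) {y y' : B.X} {z z' : C.X}
    (hy : y' ∈ coset phi.UN y)
    (h1 : psi.f (coset psi.TN y) = coset psi.UN z)
    (h2 : psi.f (coset psi.TN y') = coset psi.UN z') :
    z' ∈ coset (Vcomp phi psi) z := by
  have hVne := UN_nonempty psi hψ
  have hVccl := Vcomp_closed phi psi hφ hψ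
  have hVcne := Vcomp_nonempty phi psi hφ hψ
  have hu₀ : relOf B.isScheme y y' ∈ phi.UN :=
    mem_closed_of_pair B.isScheme phi.UN_cl (relOf_mem_S _ y y') (mem_relOf _ y y') hy
  obtain ⟨v₀, hv₀S, hrel₀⟩ := elemRel_exists psi hψ (relOf_mem_S B.isScheme y y')
  have hv₀Vc : v₀ ∈ Vcomp phi psi :=
    (Vcomp_iff phi psi hφ).mpr ⟨hv₀S, relOf B.isScheme y y', hu₀, hrel₀⟩
  have hpush := elemRel_push_pair psi hψ hrel₀ (mem_relOf B.isScheme y y')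
  rw [h1, h2] at hpush
  obtain ⟨σ1, σ2, c, d, heq, hcd, hc, hd⟩ := quotRel_elim hpush
  have e1 : coset psi.UN z = coset psi.UN σ1 := congrArg Prod.fst heq
  have e2 : coset psi.UN z' = coset psi.UN σ2 := congrArg Prod.snd heq
  have hcz : c ∈ coset psi.UN z := by rw [e1]; exact hc
  have hdz' : d ∈ coset psi.UN z' := by rw [e2]; exact hd
  have hVsub := VN_sub_Vcomp' phi psi hφ hψ
  have step1 : c ∈ coset (Vcomp phi psi) z := by
    obtain ⟨τ, hτ, hm⟩ := hcz; exact ⟨τ, hVsub hτ, hm⟩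
  have step2 : d ∈ coset (Vcomp phi psi) c := ⟨v₀, hv₀Vc, hcd⟩
  have step3 : z' ∈ coset (Vcomp phi psi) d := by
    have : z' ∈ coset psi.UN d :=
      coset_symm C.isScheme psi.UN_cl hVne hdz'
    obtain ⟨τ, hτ, hm⟩ := this; exact ⟨τ, hVsub hτ, hm⟩
  exact coset_trans C.isScheme hVccl hVcne
    (coset_trans C.isScheme hVccl hVcne step1 step2) step3

/-- The core pushforward lemma. -/
lemma core (hφ : phi.TN.Nonempty) (hψ : psi.TN.Nonempty) {x1 x2 : A.X}
    {t : Set (A.X × A.X)} {u : Set (B.X × B.X)} {v : Set (C.X × C.X)}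
    (hx : (x1, x2) ∈ t) (h1 : elemRel phi t u) (h2 : elemRel psi u v) :
    ∃ c d, (c, d) ∈ v ∧ c ∈ coset (Vcomp phi psi) (zOf phi psi x1) ∧
      d ∈ coset (Vcomp phi psi) (zOf phi psi x2) := by
  have hUne := UN_nonempty phi hφ
  have hpush := elemRel_push_pair phi hφ h1 hx
  rw [yOf_spec phi x1, yOf_spec phi x2] at hpush
  obtain ⟨ρ1, ρ2, q1, q2, heq, hq, hq1, hq2⟩ := quotRel_elim hpush
  have e1 : coset phi.UN (yOf phi x1) = coset phi.UN ρ1 := congrArg Prod.fst heq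
  have e2 : coset phi.UN (yOf phi x2) = coset phi.UN ρ2 := congrArg Prod.snd heq
  have hq1' : q1 ∈ coset phi.UN (yOf phi x1) := by rw [e1]; exact hq1
  have hq2' : q2 ∈ coset phi.UN (yOf phi x2) := by rw [e2]; exact hq2
  have hpush2 := elemRel_push_pair psi hψ h2 hq
  obtain ⟨σ1, σ2, c, d, heq2, hcd, hc, hd⟩ := quotRel_elim hpush2
  have f1 : psi.f (coset psi.TN q1) = coset psi.UN σ1 := congrArg Prod.fst heq2
  have f2 : psi.f (coset psi.TN q2) = coset psi.UN σ2 := congrArg Prod.snd heq2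
  have hVccl := Vcomp_closed phi psi hφ hψ
  have hVcne := Vcomp_nonempty phi psi hφ hψ
  have hVsub := VN_sub_Vcomp' phi psi hφ hψ
  have hσ1 : σ1 ∈ coset (Vcomp phi psi) (zOf phi psi x1) :=
    z_near phi psi hφ hψ hq1' (zOf_spec phi psi x1) f1
  have hσ2 : σ2 ∈ coset (Vcomp phi psi) (zOf phi psi x2) :=
    z_near phi psi hφ hψ hq2' (zOf_spec phi psi x2) f2
  exact ⟨c, d, hcd,
    coset_trans C.isScheme hVccl hVcne hσ1 (coset_sub hVsub σ1 hc),
    coset_trans C.isScheme hVccl hVcne hσ2 (coset_sub hVsub σ2 hd)⟩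

end GMap

section GMap2

set_option linter.unusedSectionVars false

variable {A B C : BScheme} (phi : HomC A B) (psi : HomC B C)

lemma wd_forward (hφ : phi.TN.Nonempty) (hψ : psi.TN.Nonempty) {x1 x2 : A.X}
    (h : x2 ∈ coset (Tcomp phi psi) x1) :
    zOf phi psi x2 ∈ coset (Vcomp phi psi) (zOf phi psi x1) := by
  obtain ⟨t, htTc, hx⟩ := h
  obtain ⟨htS, u, huT, hrel⟩ := (Tcomp_iff phi psi hψ).mp htTc
  have hrel2 : elemRel psi u (diagRel C.X) :=
    (elemRel_diag_iff_TN psi hψ (psi.TN_cl.1 huT)).mpr huT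
  obtain ⟨c, d, hcd, hc, hd⟩ := core phi psi hφ hψ hx hrel hrel2
  have hcdeq : c = d := hcd
  have hVccl := Vcomp_closed phi psi hφ hψ
  have hVcne := Vcomp_nonempty phi psi hφ hψ
  rw [hcdeq] at hc
  exact coset_trans C.isScheme hVccl hVcne hc
    (coset_symm C.isScheme hVccl hVcne hd)

/-- If the class chain of `t` lands (mod `V_{φψ}`) on the diagonal, then
`t ∈ T_{φψ}`. -/
lemma lift_mem_Tcomp (hφ : phi.TN.Nonempty) (hψ : psi.TN.Nonempty)
    {t : Set (A.X × A.X)} {u : Set (B.X × B.X)} {v : Set (C.X × C.X)}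
    (htS : t ∈ A.S) (huS : u ∈ B.S) (hvS : v ∈ C.S)
    (h1 : elemRel phi t u) (h2 : elemRel psi u v) (hvVc : v ∈ Vcomp phi psi) :
    t ∈ Tcomp phi psi := by
  obtain ⟨-, u', hu'U, hrelu'⟩ := (Vcomp_iff phi psi hφ).mp hvVc
  have heqU : quotRel psi.TN u = quotRel psi.TN u' :=
    elemRel_unique_t psi huS (phi.UN_cl.1 hu'U) hvS h2 hrelu'
  obtain ⟨⟨b1, b2⟩, hb⟩ := scheme_nonempty B.isScheme huS
  obtain ⟨c1, c2, hc, hc1, hc2⟩ :=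
    pair_near_of_quotRel_eq B.isScheme psi.TN_cl hψ heqU hb
  -- chain : b1 →(Uψ) c1 →(u' ∈ Uφ) c2 →(Uψ*) b2
  obtain ⟨q1, hq1, hb1c1⟩ := hc1
  obtain ⟨t', ht', h, hb1h, hhc2⟩ := normal_flip B.isScheme phi.UN_n phi.UN_cl.1
    (psi.TN_cl.1 hq1) hu'U hb1c1 hc
  -- u'' := relOf h b2 ∈ Uψ
  obtain ⟨q2, hq2, hb2c2⟩ := hc2
  have hu'' : relOf B.isScheme h b2 ∈ psi.TN :=
    cmul_closed B.isScheme psi.TN_cl hψ hq1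
      (transp_mem_closed B.isScheme psi.TN_cl hψ hq2)
      (relOf_cmul B.isScheme (psi.TN_cl.1 hq1)
        (transp_mem B.isScheme (psi.TN_cl.1 hq2)) hhc2 (mem_transp.mpr hb2c2))
  have hnear : quotRel phi.UN u = quotRel phi.UN (relOf B.isScheme h b2) :=
    quotRel_eq_of_near B.isScheme phi.UN_cl (UN_nonempty phi hφ) huS
      (relOf_mem_S _ h b2) hb (mem_relOf _ h b2) ⟨t', ht', hb1h⟩
      (mem_coset_self B.isScheme phi.UN_cl (UN_nonempty phi hφ) b2)
  exact (Tcomp_iff phi psi hψ).mpr ⟨htS, relOf B.isScheme h b2, hu'',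
    elemRel_congr_u phi hnear h1⟩

lemma wd_backward (hφ : phi.TN.Nonempty) (hψ : psi.TN.Nonempty) {x1 x2 : A.X}
    (h : zOf phi psi x2 ∈ coset (Vcomp phi psi) (zOf phi psi x1)) :
    x2 ∈ coset (Tcomp phi psi) x1 := by
  have hVccl := Vcomp_closed phi psi hφ hψ
  have hVcne := Vcomp_nonempty phi psi hφ hψ
  obtain ⟨u, huS, hrelu⟩ := elemRel_exists phi hφ (relOf_mem_S A.isScheme x1 x2)
  obtain ⟨v, hvS, hrelv⟩ := elemRel_exists psi hψ huS
  obtain ⟨c, d, hcd, hc, hd⟩ := core phi psi hφ hψ (mem_relOf A.isScheme x1 x2) hrelu hrelv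
  -- d ∈ coset Vc c
  have hdc : d ∈ coset (Vcomp phi psi) c := by
    have h1 : d ∈ coset (Vcomp phi psi) (zOf phi psi x1) :=
      coset_trans C.isScheme hVccl hVcne h hd
    rwa [coset_eq_of_mem C.isScheme hVccl hVcne hc] at h1
  have hvVc : v ∈ Vcomp phi psi :=
    mem_closed_of_pair C.isScheme hVccl hvS hcd hdc
  have htTc : relOf A.isScheme x1 x2 ∈ Tcomp phi psi :=
    lift_mem_Tcomp phi psi hφ hψ (relOf_mem_S A.isScheme x1 x2) huS hvS hrelu hrelv hvVc
  exact ⟨relOf A.isScheme x1 x2, htTc, mem_relOf A.isScheme x1 x2⟩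

open Classical in
/-- The composite isomorphism on cosets. -/
noncomputable def gMapC : Set A.X → Set C.X := fun Cs =>
  if h : ∃ x, Cs = coset (Tcomp phi psi) x then
    coset (Vcomp phi psi) (zOf phi psi h.choose)
  else ∅

lemma gMapC_coset (hφ : phi.TN.Nonempty) (hψ : psi.TN.Nonempty) (x : A.X) :
    gMapC phi psi (coset (Tcomp phi psi) x) = coset (Vcomp phi psi) (zOf phi psi x) := by
  have hTccl := Tcomp_closed phi psi hφ hψ
  have hTcne := Tcomp_nonempty phi psi hφ hψ
  have hVccl := Vcomp_closed phi psi hφ hψ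
  have hVcne := Vcomp_nonempty phi psi hφ hψ
  have hex : ∃ x', coset (Tcomp phi psi) x = coset (Tcomp phi psi) x' := ⟨x, rfl⟩
  rw [gMapC, dif_pos hex]
  have hspec := hex.choose_spec
  have hx : hex.choose ∈ coset (Tcomp phi psi) x := by
    have h0 := mem_coset_self A.isScheme hTccl hTcne hex.choose
    rwa [← hspec] at h0
  exact (coset_eq_of_mem C.isScheme hVccl hVcne
    (wd_forward phi psi hφ hψ hx)).symm

/-- Main morphism property of `gMap`. -/
lemma gMapC_mor (hφ : phi.TN.Nonempty) (hψ : psi.TN.Nonempty)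
    {t : Set (A.X × A.X)} {u : Set (B.X × B.X)} {v : Set (C.X × C.X)}
    (h1 : elemRel phi t u) (h2 : elemRel psi u v) :
    elemMapsTo (gMapC phi psi) (quotRel (Tcomp phi psi) t)
      (quotRel (Vcomp phi psi) v) := by
  have hVccl := Vcomp_closed phi psi hφ hψ
  have hVcne := Vcomp_nonempty phi psi hφ hψ
  intro w hw
  obtain ⟨x1, x2, a, b, hweq, hab, ha, hb⟩ := quotRel_elim hw
  obtain ⟨c, d, hcd, hc, hd⟩ := core phi psi hφ hψ hab h1 h2
  have hza : zOf phi psi a ∈ coset (Vcomp phi psi) (zOf phi psi x1) :=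
    wd_forward phi psi hφ hψ ha
  have hzb : zOf phi psi b ∈ coset (Vcomp phi psi) (zOf phi psi x2) :=
    wd_forward phi psi hφ hψ hb
  have hc' : c ∈ coset (Vcomp phi psi) (zOf phi psi x1) :=
    coset_trans C.isScheme hVccl hVcne hza hc
  have hd' : d ∈ coset (Vcomp phi psi) (zOf phi psi x2) :=
    coset_trans C.isScheme hVccl hVcne hzb hd
  rw [hweq]
  simp only
  rw [gMapC_coset phi psi hφ hψ x1, gMapC_coset phi psi hφ hψ x2]
  exact quotRel_intro hcd hc' hd'

end GMap2

section GMap3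

set_option linter.unusedSectionVars false

variable {A B C : BScheme} (phi : HomC A B) (psi : HomC B C)

lemma class_eq_of_u_near (hφ : phi.TN.Nonempty) (hψ : psi.TN.Nonempty)
    {t t'' : Set (A.X × A.X)} {u u'' : Set (B.X × B.X)}
    (htS : t ∈ A.S) (ht''S : t'' ∈ A.S) (huS : u ∈ B.S) (hu''S : u'' ∈ B.S)
    (h1 : elemRel phi t u) (h2 : elemRel phi t'' u'')
    (he : quotRel psi.TN u = quotRel psi.TN u'') :
    quotRel (Tcomp phi psi) t'' = quotRel (Tcomp phi psi) t := by
  have hUne := UN_nonempty phi hφ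
  have hTccl := Tcomp_closed phi psi hφ hψ
  have hTcne := Tcomp_nonempty phi psi hφ hψ
  obtain ⟨⟨x1, x2⟩, hx⟩ := scheme_nonempty A.isScheme ht''S
  have hpush := elemRel_push_pair phi hφ h2 hx
  obtain ⟨ρ1, ρ2, b1, b2, heq, hb, hb1, hb2⟩ := quotRel_elim hpush
  have e1 : phi.f (coset phi.TN x1) = coset phi.UN ρ1 := congrArg Prod.fst heq
  have e2 : phi.f (coset phi.TN x2) = coset phi.UN ρ2 := congrArg Prod.snd heq
  obtain ⟨c1, c2, hc, hc1, hc2⟩ :=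
    pair_near_of_quotRel_eq B.isScheme psi.TN_cl hψ he.symm hb
  obtain ⟨w, hfw⟩ := f_surj_coset phi (coset_mem_cosets phi.UN c1)
  obtain ⟨w', hfw'⟩ := f_surj_coset phi (coset_mem_cosets phi.UN c2)
  -- x1 → w through a Uψ element
  have hrc1 : relOf B.isScheme b1 c1 ∈ psi.TN :=
    mem_closed_of_pair B.isScheme psi.TN_cl (relOf_mem_S _ b1 c1)
      (mem_relOf _ b1 c1) hc1
  have him1 : (phi.f (coset phi.TN x1), phi.f (coset phi.TN w)) ∈
      quotRel phi.UN (relOf B.isScheme b1 c1) := by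
    rw [e1, hfw]
    exact quotRel_intro (mem_relOf _ b1 c1) hb1
      (mem_coset_self B.isScheme phi.UN_cl hUne c1)
  obtain ⟨s1, hs1S, hxw, hrels1⟩ :=
    elemRel_pullback phi hφ (psi.TN_cl.1 hrc1) him1
  have hwTc : w ∈ coset (Tcomp phi psi) x1 :=
    ⟨s1, (Tcomp_iff phi psi hψ).mpr ⟨hs1S, _, hrc1, hrels1⟩, hxw⟩
  have hrc2 : relOf B.isScheme b2 c2 ∈ psi.TN :=
    mem_closed_of_pair B.isScheme psi.TN_cl (relOf_mem_S _ b2 c2)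
      (mem_relOf _ b2 c2) hc2
  have him2 : (phi.f (coset phi.TN x2), phi.f (coset phi.TN w')) ∈
      quotRel phi.UN (relOf B.isScheme b2 c2) := by
    rw [e2, hfw']
    exact quotRel_intro (mem_relOf _ b2 c2) hb2
      (mem_coset_self B.isScheme phi.UN_cl hUne c2)
  obtain ⟨s1', hs1'S, hxw', hrels1'⟩ :=
    elemRel_pullback phi hφ (psi.TN_cl.1 hrc2) him2
  have hw'Tc : w' ∈ coset (Tcomp phi psi) x2 :=
    ⟨s1', (Tcomp_iff phi psi hψ).mpr ⟨hs1'S, _, hrc2, hrels1'⟩, hxw'⟩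
  -- w → w' through u
  have him3 : (phi.f (coset phi.TN w), phi.f (coset phi.TN w')) ∈ quotRel phi.UN u := by
    rw [hfw, hfw']
    exact quotRel_intro hc (mem_coset_self B.isScheme phi.UN_cl hUne c1)
      (mem_coset_self B.isScheme phi.UN_cl hUne c2)
  obtain ⟨s2, hs2S, hww', hrels2⟩ := elemRel_pullback phi hφ huS him3
  have heqT : quotRel phi.TN s2 = quotRel phi.TN t :=
    elemRel_unique_t phi hs2S htS huS hrels2 h1
  obtain ⟨k1, k2, hk, hk1, hk2⟩ :=
    pair_near_of_quotRel_eq A.isScheme phi.TN_cl hφ heqT hww'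
  have hk1Tc : k1 ∈ coset (Tcomp phi psi) x1 :=
    coset_trans A.isScheme hTccl hTcne hwTc
      (coset_sub (TN_sub_Tcomp phi psi hψ) w hk1)
  have hk2Tc : k2 ∈ coset (Tcomp phi psi) x2 :=
    coset_trans A.isScheme hTccl hTcne hw'Tc
      (coset_sub (TN_sub_Tcomp phi psi hψ) w' hk2)
  exact quotRel_eq_of_near A.isScheme hTccl hTcne ht''S htS hx hk hk1Tc hk2Tc

lemma exists_u_of_class_eq (hφ : phi.TN.Nonempty) (hψ : psi.TN.Nonempty)
    {t : Set (A.X × A.X)} {u₀ : Set (B.X × B.X)} {v₀ v : Set (C.X × C.X)}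
    (htS : t ∈ A.S) (hu₀S : u₀ ∈ B.S) (hv₀S : v₀ ∈ C.S) (hvS : v ∈ C.S)
    (h1 : elemRel phi t u₀) (h2 : elemRel psi u₀ v₀)
    (he : quotRel (Vcomp phi psi) v₀ = quotRel (Vcomp phi psi) v) :
    ∃ u ∈ B.S, elemRel phi t u ∧ elemRel psi u v := by
  have hUφne := UN_nonempty phi hφ
  have hVψne := UN_nonempty psi hψ
  have hVccl := Vcomp_closed phi psi hφ hψ
  have hVcne := Vcomp_nonempty phi psi hφ hψ
  obtain ⟨⟨γa, γb⟩, hγ⟩ := scheme_nonempty C.isScheme hv₀S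
  obtain ⟨γc, γd, hγcd, hγc, hγd⟩ :=
    pair_near_of_quotRel_eq C.isScheme hVccl hVcne he hγ
  obtain ⟨v₁, hv₁Vc, hγac⟩ := hγc
  obtain ⟨v₂, hv₂Vc, hγbd⟩ := hγd
  obtain ⟨-, n1, hn1U, hreln1⟩ := (Vcomp_iff phi psi hφ).mp hv₁Vc
  obtain ⟨-, n2, hn2U, hreln2⟩ := (Vcomp_iff phi psi hφ).mp hv₂Vc
  obtain ⟨ea, hEa⟩ := f_surj_coset psi (coset_mem_cosets psi.UN γa)
  obtain ⟨ec, hEc⟩ := f_surj_coset psi (coset_mem_cosets psi.UN γc)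
  obtain ⟨ed, hEd⟩ := f_surj_coset psi (coset_mem_cosets psi.UN γd)
  obtain ⟨eb, hEb⟩ := f_surj_coset psi (coset_mem_cosets psi.UN γb)
  have hv₁S : v₁ ∈ C.S := Vcomp_sub phi psi hv₁Vc
  have hv₂S : v₂ ∈ C.S := Vcomp_sub phi psi hv₂Vc
  -- pull back the four circuit segments
  have hima : (psi.f (coset psi.TN ea), psi.f (coset psi.TN ec)) ∈ quotRel psi.UN v₁ := by
    rw [hEa, hEc]; exact quotRel_nonempty C.isScheme psi.UN_cl hVψne hγac
  obtain ⟨m1, hm1S, hea_ec, hrelm1⟩ := elemRel_pullback psi hψ hv₁S hima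
  have himc : (psi.f (coset psi.TN ec), psi.f (coset psi.TN ed)) ∈ quotRel psi.UN v := by
    rw [hEc, hEd]; exact quotRel_nonempty C.isScheme psi.UN_cl hVψne hγcd
  obtain ⟨m, hmS, hec_ed, hrelm⟩ := elemRel_pullback psi hψ hvS himc
  have himd : (psi.f (coset psi.TN ed), psi.f (coset psi.TN eb)) ∈
      quotRel psi.UN (transp v₂) := by
    rw [hEd, hEb]
    exact quotRel_nonempty C.isScheme psi.UN_cl hVψne (mem_transp.mpr hγbd)
  obtain ⟨m2, hm2S, hed_eb, hrelm2⟩ :=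
    elemRel_pullback psi hψ (transp_mem C.isScheme hv₂S) himd
  have himb : (psi.f (coset psi.TN ea), psi.f (coset psi.TN eb)) ∈ quotRel psi.UN v₀ := by
    rw [hEa, hEb]; exact quotRel_nonempty C.isScheme psi.UN_cl hVψne hγ
  obtain ⟨m0, hm0S, hea_eb, hrelm0⟩ := elemRel_pullback psi hψ hv₀S himb
  -- class identifications in B
  have he1 : quotRel psi.TN m1 = quotRel psi.TN n1 :=
    elemRel_unique_t psi hm1S (phi.UN_cl.1 hn1U) hv₁S hrelm1 hreln1
  have he2 : quotRel psi.TN m2 = quotRel psi.TN (transp n2) :=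
    elemRel_unique_t psi hm2S (transp_mem B.isScheme (phi.UN_cl.1 hn2U))
      (transp_mem C.isScheme hv₂S) hrelm2 (elemRel_transp psi hreln2)
  have he0 : quotRel psi.TN m0 = quotRel psi.TN u₀ :=
    elemRel_unique_t psi hm0S hu₀S hv₀S hrelm0 h2
  obtain ⟨α1, β1, hαβ1, hα1, hβ1⟩ :=
    pair_near_of_quotRel_eq B.isScheme psi.TN_cl hψ he1 hea_ec
  obtain ⟨α2, β2, hαβ2, hα2, hβ2⟩ :=
    pair_near_of_quotRel_eq B.isScheme psi.TN_cl hψ he2 hed_eb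
  -- m' := relOf β1 α2, a Uψ-class mate of m
  have hqec : relOf B.isScheme β1 ec ∈ psi.TN :=
    mem_closed_of_pair B.isScheme psi.TN_cl (relOf_mem_S _ β1 ec)
      (mem_relOf _ β1 ec) (coset_symm B.isScheme psi.TN_cl hψ hβ1)
  have hqed : relOf B.isScheme ed α2 ∈ psi.TN :=
    mem_closed_of_pair B.isScheme psi.TN_cl (relOf_mem_S _ ed α2)
      (mem_relOf _ ed α2) hα2
  have hmA : relOf B.isScheme β1 ed ∈ cmulS B.S (relOf B.isScheme β1 ec) m :=
    relOf_cmul B.isScheme (relOf_mem_S _ β1 ec) hmS (mem_relOf _ β1 ec) hec_ed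
  have hm' : relOf B.isScheme β1 α2 ∈
      cmulS B.S (relOf B.isScheme β1 ed) (relOf B.isScheme ed α2) :=
    relOf_cmul B.isScheme (relOf_mem_S _ β1 ed) (relOf_mem_S _ ed α2)
      (mem_relOf _ β1 ed) (mem_relOf _ ed α2)
  have hm'm : quotRel psi.TN (relOf B.isScheme β1 α2) = quotRel psi.TN m :=
    quotRel_eq_of_near B.isScheme psi.TN_cl hψ (relOf_mem_S _ β1 α2) hmS
      (mem_relOf _ β1 α2) hec_ed (coset_symm B.isScheme psi.TN_cl hψ hβ1)
      (coset_symm B.isScheme psi.TN_cl hψ hα2)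
  -- u₀'' := relOf α1 β2
  have hmB : relOf B.isScheme α1 α2 ∈ cmulS B.S n1 (relOf B.isScheme β1 α2) :=
    relOf_cmul B.isScheme (phi.UN_cl.1 hn1U) (relOf_mem_S _ β1 α2) hαβ1
      (mem_relOf _ β1 α2)
  have hu₀'' : relOf B.isScheme α1 β2 ∈
      cmulS B.S (relOf B.isScheme α1 α2) (transp n2) :=
    relOf_cmul B.isScheme (relOf_mem_S _ α1 α2)
      (transp_mem B.isScheme (phi.UN_cl.1 hn2U)) (mem_relOf _ α1 α2) hαβ2
  have heu : quotRel psi.TN u₀ = quotRel psi.TN (relOf B.isScheme α1 β2) := by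
    rw [← he0]
    exact quotRel_eq_of_near B.isScheme psi.TN_cl hψ hm0S (relOf_mem_S _ α1 β2)
      hea_eb (mem_relOf _ α1 β2) hα1 hβ2
  -- transport a pair of u₀ along the chain
  obtain ⟨⟨g1, g2⟩, hg⟩ := scheme_nonempty B.isScheme hu₀S
  obtain ⟨h1', h2', hh', hh1', hh2'⟩ :=
    pair_near_of_quotRel_eq B.isScheme psi.TN_cl hψ heu hg
  obtain ⟨k2, hk2a, hk2b⟩ := cmul_elim B.isScheme (relOf_mem_S _ α1 α2)
    (transp_mem B.isScheme (phi.UN_cl.1 hn2U)) hu₀'' hh'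
  obtain ⟨k1, hk1a, hk1b⟩ := cmul_elim B.isScheme (phi.UN_cl.1 hn1U)
    (relOf_mem_S _ β1 α2) hmB hk2a
  -- left flip : g1 →(Uψ) h1' →(n1) k1  ⇒  g1 →(n1) hh →(qB ∈ Uψ) k1
  obtain ⟨qA, hqA, hg1h1'⟩ := hh1'
  obtain ⟨qB, hqB, hh, hg1hh, hhhk1⟩ := normal_flip' B.isScheme psi.TN_n psi.TN_cl.1
    (phi.UN_cl.1 hn1U) hqA hg1h1' hk1a
  -- right flip : k2 →(transp n2) h2' →(qC ∈ Uψ) g2  ⇒  k2 →(qD ∈ Uψ) hh2 →(transp n2) g2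
  obtain ⟨qC, hqC, hh2'g2⟩ := coset_symm B.isScheme psi.TN_cl hψ hh2'
  obtain ⟨qD, hqD, hh2, hk2hh2, hhh2g2⟩ := normal_flip B.isScheme psi.TN_n psi.TN_cl.1
    (transp_mem B.isScheme (phi.UN_cl.1 hn2U)) hqC hk2b hh2'g2
  -- m'' := relOf hh hh2
  have hmC : relOf B.isScheme hh k2 ∈ cmulS B.S qB (relOf B.isScheme β1 α2) :=
    relOf_cmul B.isScheme (psi.TN_cl.1 hqB) (relOf_mem_S _ β1 α2) hhhk1 hk1b
  have hm'' : relOf B.isScheme hh hh2 ∈ cmulS B.S (relOf B.isScheme hh k2) qD :=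
    relOf_cmul B.isScheme (relOf_mem_S _ hh k2) (psi.TN_cl.1 hqD)
      (mem_relOf _ hh k2) hk2hh2
  have hm''m' : quotRel psi.TN (relOf B.isScheme hh hh2) =
      quotRel psi.TN (relOf B.isScheme β1 α2) :=
    quotRel_eq_of_near B.isScheme psi.TN_cl hψ (relOf_mem_S _ hh hh2)
      (relOf_mem_S _ β1 α2) (mem_relOf _ hh hh2) hk1b ⟨qB, hqB, hhhk1⟩
      (coset_symm B.isScheme psi.TN_cl hψ ⟨qD, hqD, hk2hh2⟩)
  have hfinU : quotRel phi.UN u₀ = quotRel phi.UN (relOf B.isScheme hh hh2) :=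
    quotRel_eq_of_near B.isScheme phi.UN_cl hUφne hu₀S (relOf_mem_S _ hh hh2)
      hg (mem_relOf _ hh hh2) ⟨n1, hn1U, hg1hh⟩
      (coset_symm B.isScheme phi.UN_cl hUφne
        ⟨transp n2, transp_mem_closed B.isScheme phi.UN_cl hUφne hn2U, hhh2g2⟩)
  refine ⟨relOf B.isScheme hh hh2, relOf_mem_S _ hh hh2,
    elemRel_congr_u phi hfinU h1, ?_⟩
  have : quotRel psi.TN m = quotRel psi.TN (relOf B.isScheme hh hh2) := by
    rw [hm''m', hm'm]
  exact elemRel_congr_t psi this hrelm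
end GMap3

section CaseA

set_option linter.unusedSectionVars false

variable {A B C : BScheme} (phi : HomC A B) (psi : HomC B C)

lemma gMapC_mor_inv (hφ : phi.TN.Nonempty) (hψ : psi.TN.Nonempty)
    {t : Set (A.X × A.X)} {v : Set (C.X × C.X)} (htS : t ∈ A.S) (hvS : v ∈ C.S)
    (h : elemMapsTo (gMapC phi psi) (quotRel (Tcomp phi psi) t)
      (quotRel (Vcomp phi psi) v)) :
    ∃ u ∈ B.S, elemRel phi t u ∧ elemRel psi u v := by
  have hTccl := Tcomp_closed phi psi hφ hψ
  have hTcne := Tcomp_nonempty phi psi hφ hψ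
  have hVccl := Vcomp_closed phi psi hφ hψ
  have hVcne := Vcomp_nonempty phi psi hφ hψ
  obtain ⟨u₀, hu₀S, h1⟩ := elemRel_exists phi hφ htS
  obtain ⟨v₀, hv₀S, h2⟩ := elemRel_exists psi hψ hu₀S
  obtain ⟨⟨x1, x2⟩, hx⟩ := scheme_nonempty A.isScheme htS
  have hw : (coset (Tcomp phi psi) x1, coset (Tcomp phi psi) x2) ∈
      quotRel (Tcomp phi psi) t := quotRel_nonempty A.isScheme hTccl hTcne hx
  have himg : (gMapC phi psi (coset (Tcomp phi psi) x1),
      gMapC phi psi (coset (Tcomp phi psi) x2)) ∈ quotRel (Vcomp phi psi) v :=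
    h _ hw
  rw [gMapC_coset phi psi hφ hψ, gMapC_coset phi psi hφ hψ] at himg
  obtain ⟨c, d, hcd, hc, hd⟩ := core phi psi hφ hψ hx h1 h2
  have himg0 : (coset (Vcomp phi psi) (zOf phi psi x1),
      coset (Vcomp phi psi) (zOf phi psi x2)) ∈ quotRel (Vcomp phi psi) v₀ :=
    quotRel_intro hcd hc hd
  have he := quotRel_eq_of_common C.isScheme hVccl hVcne hv₀S hvS himg0 himg
  exact exists_u_of_class_eq phi psi hφ hψ htS hu₀S hv₀S hvS h1 h2 he

lemma caseA (hφ : phi.TN.Nonempty) (hψ : psi.TN.Nonempty) :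
    (IsClosedIn A.S (Tcomp phi psi) ∧ IsNormalIn A.S (Tcomp phi psi)) ∧
    (IsClosedIn C.S (Vcomp phi psi) ∧ IsNormalIn C.S (Vcomp phi psi)) ∧
    ∃ g : Set A.X → Set C.X,
      IsBasedIsoOn (quotPres A.S (Tcomp phi psi) A.base)
        (quotPres C.S (Vcomp phi psi) C.base) g ∧
      (∀ (x : A.X) (y : B.X) (z : C.X),
        phi.f (coset phi.TN x) = coset phi.UN y →
        psi.f (coset psi.TN y) = coset psi.UN z →
        g (coset (Tcomp phi psi) x) = coset (Vcomp phi psi) z) ∧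
      (∀ t ∈ A.S, ∀ v ∈ C.S,
        elemMapsTo g (quotRel (Tcomp phi psi) t) (quotRel (Vcomp phi psi) v) ↔
          ∃ u ∈ B.S, elemRel phi t u ∧ elemRel psi u v) := by
  have hTccl := Tcomp_closed phi psi hφ hψ
  have hTcne := Tcomp_nonempty phi psi hφ hψ
  have hVccl := Vcomp_closed phi psi hφ hψ
  have hVcne := Vcomp_nonempty phi psi hφ hψ
  refine ⟨⟨hTccl, Tcomp_normal phi psi hφ hψ⟩, ⟨hVccl, Vcomp_normal phi psi hφ hψ⟩,
    gMapC phi psi, ⟨⟨⟨?_, ?_⟩, ⟨?_, ?_, ?_⟩, ?_⟩, ?_⟩, ?_, ?_⟩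
  · -- MapsTo
    rintro Cs ⟨x, rfl⟩
    rw [gMapC_coset phi psi hφ hψ]
    exact ⟨zOf phi psi x, rfl⟩
  · -- morphism pair condition
    rintro s ⟨t, htS, rfl⟩ w hw w' hw'
    obtain ⟨u, huS, hrelu⟩ := elemRel_exists phi hφ htS
    obtain ⟨v, hvS, hrelv⟩ := elemRel_exists psi hψ huS
    exact ⟨quotRel (Vcomp phi psi) v, ⟨v, hvS, rfl⟩,
      gMapC_mor phi psi hφ hψ hrelu hrelv w hw,
      gMapC_mor phi psi hφ hψ hrelu hrelv w' hw'⟩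
  · -- MapsTo (again, inside BijOn)
    rintro Cs ⟨x, rfl⟩
    rw [gMapC_coset phi psi hφ hψ]
    exact ⟨zOf phi psi x, rfl⟩
  · -- InjOn
    rintro C1 ⟨x1, rfl⟩ C2 ⟨x2, rfl⟩ hgeq
    rw [gMapC_coset phi psi hφ hψ, gMapC_coset phi psi hφ hψ] at hgeq
    have hz : zOf phi psi x2 ∈ coset (Vcomp phi psi) (zOf phi psi x1) := by
      rw [hgeq]
      exact mem_coset_self C.isScheme hVccl hVcne _
    exact coset_eq_of_mem A.isScheme hTccl hTcne (wd_backward phi psi hφ hψ hz)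
  · -- SurjOn
    rintro D ⟨z, rfl⟩
    obtain ⟨y, hy⟩ := f_surj_coset psi (coset_mem_cosets psi.UN z)
    obtain ⟨x, hx⟩ := f_surj_coset phi (coset_mem_cosets phi.UN y)
    have hyx : yOf phi x ∈ coset phi.UN y := by
      have h0 : coset phi.UN y = coset phi.UN (yOf phi x) := by
        rw [← hx, yOf_spec]
      rw [h0]
      exact mem_coset_self B.isScheme phi.UN_cl (UN_nonempty phi hφ) _
    have hz := z_near phi psi hφ hψ hyx hy (zOf_spec phi psi x)
    exact ⟨coset (Tcomp phi psi) x, ⟨x, rfl⟩, by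
      rw [gMapC_coset phi psi hφ hψ]
      exact (coset_eq_of_mem C.isScheme hVccl hVcne hz).symm⟩
  · -- unique preimage relation
    rintro t' ⟨v, hvS, rfl⟩
    obtain ⟨u, huS, hrelu⟩ := elemRel_surj psi hvS
    obtain ⟨t, htS, hrelt⟩ := elemRel_surj phi huS
    refine ⟨quotRel (Tcomp phi psi) t, ⟨⟨t, htS, rfl⟩,
      gMapC_mor phi psi hφ hψ hrelt hrelu⟩, ?_⟩
    rintro s' ⟨⟨t'', ht''S, rfl⟩, hmaps⟩
    obtain ⟨u'', hu''S, h1'', h2''⟩ :=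
      gMapC_mor_inv phi psi hφ hψ ht''S hvS hmaps
    have he : quotRel psi.TN u = quotRel psi.TN u'' :=
      elemRel_unique_t psi huS hu''S hvS hrelu h2''
    exact class_eq_of_u_near phi psi hφ hψ htS ht''S huS hu''S hrelt h1'' he
  · -- basepoint
    show gMapC phi psi (coset (Tcomp phi psi) A.base) = coset (Vcomp phi psi) C.base
    rw [gMapC_coset phi psi hφ hψ]
    have hbase1 : phi.f (coset phi.TN A.base) = coset phi.UN B.base := phi.iso.2
    have hbase2 : psi.f (coset psi.TN B.base) = coset psi.UN C.base := psi.iso.2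
    have hyb : yOf phi A.base ∈ coset phi.UN B.base := by
      have h0 : coset phi.UN B.base = coset phi.UN (yOf phi A.base) := by
        rw [← hbase1, yOf_spec]
      rw [h0]
      exact mem_coset_self B.isScheme phi.UN_cl (UN_nonempty phi hφ) _
    exact (coset_eq_of_mem C.isScheme hVccl hVcne
      (z_near phi psi hφ hψ hyb hbase2 (zOf_spec phi psi A.base))).symm
  · -- composite condition
    intro x y z hxy hyz
    rw [gMapC_coset phi psi hφ hψ]
    have hyx : yOf phi x ∈ coset phi.UN y := by
      have h0 : coset phi.UN y = coset phi.UN (yOf phi x) := by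
        rw [← hxy, yOf_spec]
      rw [h0]
      exact mem_coset_self B.isScheme phi.UN_cl (UN_nonempty phi hφ) _
    exact (coset_eq_of_mem C.isScheme hVccl hVcne
      (z_near phi psi hφ hψ hyx hyz (zOf_spec phi psi x))).symm
  · -- the characterization of the induced map on elements
    intro t htS v hvS
    constructor
    · exact gMapC_mor_inv phi psi hφ hψ htS hvS
    · rintro ⟨u, huS, h1, h2⟩
      exact gMapC_mor phi psi hφ hψ h1 h2

end CaseA

section Degenerate

set_option linter.unusedSectionVars false

lemma coset_empty {X : Type} (x : X) : coset (∅ : Set (Set (X × X))) x = ∅ := by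
  ext y; simp [coset]

lemma quotRel_of_empty {X : Type} (s : Set (X × X)) :
    quotRel (∅ : Set (Set (X × X))) s = ∅ := by
  ext w
  simp only [Set.mem_empty_iff_false, iff_false]
  rintro ⟨x1, x2, -, p, -, h1, -⟩
  rw [coset_empty] at h1
  exact h1

lemma elemRel_empty {A B : BScheme} (φ : HomC A B) (h : φ.TN = ∅)
    (t : Set (A.X × A.X)) (u : Set (B.X × B.X)) : elemRel φ t u := by
  intro w hw
  rw [h, quotRel_of_empty] at hw
  exact absurd hw (Set.notMem_empty w)

variable {X : Type} [Fintype X] {S : Set (Set (X × X))}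

lemma coset_S (hS : IsScheme S) (x : X) : coset S x = Set.univ := by
  ext y
  simp only [Set.mem_univ, iff_true]
  exact ⟨relOf hS x y, relOf_mem_S hS x y, mem_relOf hS x y⟩

lemma S_closedIn (hS : IsScheme S) : IsClosedIn S S :=
  ⟨fun _ h => h, fun _ _ _ _ _ hr => hr.1⟩

lemma S_normalIn (hS : IsScheme S) : IsNormalIn S S := by
  unfold IsNormalIn
  intro p hp
  have hL : setMulS S {p} S = S := by
    apply Set.Subset.antisymm
    · intro r hr
      obtain ⟨p1, hp1, q1, hq1, hmem⟩ := mem_setMulS_iff.mp hr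
      exact hmem.1
    · intro r hr
      obtain ⟨⟨x, y⟩, hxy⟩ := scheme_nonempty hS hr
      obtain ⟨z, hz⟩ := exists_out hS hp x
      exact mem_setMulS_iff.mpr ⟨p, rfl, relOf hS z y, relOf_mem_S hS z y,
        cmul_intro hS hp (relOf_mem_S hS z y) hr hxy hz (mem_relOf hS z y)⟩
  have hR : setMulS S S {p} = S := by
    apply Set.Subset.antisymm
    · intro r hr
      obtain ⟨p1, hp1, q1, hq1, hmem⟩ := mem_setMulS_iff.mp hr
      exact hmem.1
    · intro r hr
      obtain ⟨⟨x, y⟩, hxy⟩ := scheme_nonempty hS hr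
      obtain ⟨z, hz⟩ := exists_out hS (transp_mem hS hp) y
      exact mem_setMulS_iff.mpr ⟨relOf hS x z, relOf_mem_S hS x z, p, rfl,
        cmul_intro hS (relOf_mem_S hS x z) hp hr hxy (mem_relOf hS x z)
          (mem_transp.mp hz)⟩
  rw [hL, hR]

lemma quotRel_S_eq (hS : IsScheme S) {s s' : Set (X × X)} (hs : s ∈ S) (hs' : s' ∈ S) :
    quotRel S s = quotRel S s' := by
  obtain ⟨⟨a, b⟩, hab⟩ := scheme_nonempty hS hs
  obtain ⟨⟨a', b'⟩, hab'⟩ := scheme_nonempty hS hs'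
  exact quotRel_eq_of_near hS (S_closedIn hS) ⟨s, hs⟩ hs hs' hab hab'
    ⟨relOf hS a a', relOf_mem_S hS a a', mem_relOf hS a a'⟩
    ⟨relOf hS b b', relOf_mem_S hS b b', mem_relOf hS b b'⟩

end Degenerate

section Trivial

set_option linter.unusedSectionVars false

variable {A B C : BScheme} (phi : HomC A B) (psi : HomC B C)

lemma trivial_case (hT : Tcomp phi psi = A.S) (hV : Vcomp phi psi = C.S)
    (hRHS : ∀ t ∈ A.S, ∀ v ∈ C.S, ∃ u ∈ B.S, elemRel phi t u ∧ elemRel psi u v) :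
    (IsClosedIn A.S (Tcomp phi psi) ∧ IsNormalIn A.S (Tcomp phi psi)) ∧
    (IsClosedIn C.S (Vcomp phi psi) ∧ IsNormalIn C.S (Vcomp phi psi)) ∧
    ∃ g : Set A.X → Set C.X,
      IsBasedIsoOn (quotPres A.S (Tcomp phi psi) A.base)
        (quotPres C.S (Vcomp phi psi) C.base) g ∧
      (∀ (x : A.X) (y : B.X) (z : C.X),
        phi.f (coset phi.TN x) = coset phi.UN y →
        psi.f (coset psi.TN y) = coset psi.UN z →
        g (coset (Tcomp phi psi) x) = coset (Vcomp phi psi) z) ∧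
      (∀ t ∈ A.S, ∀ v ∈ C.S,
        elemMapsTo g (quotRel (Tcomp phi psi) t) (quotRel (Vcomp phi psi) v) ↔
          ∃ u ∈ B.S, elemRel phi t u ∧ elemRel psi u v) := by
  rw [hT, hV]
  have hCcl := S_closedIn C.isScheme
  have hCne : (C.S).Nonempty := ⟨diagRel C.X, diag_mem C.isScheme⟩
  have hmaps : ∀ v ∈ C.S, ∀ w : Set A.X × Set A.X,
      ((fun _ => coset C.S C.base : Set A.X → Set C.X) w.1,
        (fun _ => coset C.S C.base : Set A.X → Set C.X) w.2) ∈ quotRel C.S v := by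
    intro v hvS w
    obtain ⟨⟨a, b⟩, hab⟩ := scheme_nonempty C.isScheme hvS
    refine quotRel_intro hab ?_ ?_ <;>
      · rw [coset_S C.isScheme]; trivial
  refine ⟨⟨S_closedIn A.isScheme, S_normalIn A.isScheme⟩,
    ⟨S_closedIn C.isScheme, S_normalIn C.isScheme⟩,
    (fun _ => coset C.S C.base), ⟨⟨⟨?_, ?_⟩, ⟨?_, ?_, ?_⟩, ?_⟩, rfl⟩, ?_, ?_⟩
  · exact fun Cs _ => ⟨C.base, rfl⟩
  · rintro s ⟨t, htS, rfl⟩ w hw w' hw'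
    exact ⟨quotRel C.S (diagRel C.X), ⟨diagRel C.X, diag_mem C.isScheme, rfl⟩,
      hmaps _ (diag_mem C.isScheme) w, hmaps _ (diag_mem C.isScheme) w'⟩
  · exact fun Cs _ => ⟨C.base, rfl⟩
  · rintro C1 ⟨x1, rfl⟩ C2 ⟨x2, rfl⟩ -
    rw [coset_S A.isScheme, coset_S A.isScheme]
  · rintro D ⟨z, rfl⟩
    refine ⟨coset A.S A.base, ⟨A.base, rfl⟩, ?_⟩
    rw [coset_S C.isScheme, coset_S C.isScheme]
  · rintro t' ⟨v, hvS, rfl⟩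
    refine ⟨quotRel A.S (diagRel A.X), ⟨⟨diagRel A.X, diag_mem A.isScheme, rfl⟩,
      fun w _ => hmaps v hvS w⟩, ?_⟩
    rintro s' ⟨⟨t'', ht''S, rfl⟩, -⟩
    exact quotRel_S_eq A.isScheme ht''S (diag_mem A.isScheme)
  · intro x y z _ _
    rw [coset_S C.isScheme, coset_S C.isScheme]
  · intro t htS v hvS
    exact ⟨fun _ => hRHS t htS v hvS, fun _ w _ => hmaps v hvS w⟩

end Trivial

theorem stmt0 (A B C : BScheme) (phi : HomC A B) (psi : HomC B C) :
    (IsClosedIn A.S (Tcomp phi psi) ∧ IsNormalIn A.S (Tcomp phi psi)) ∧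
    (IsClosedIn C.S (Vcomp phi psi) ∧ IsNormalIn C.S (Vcomp phi psi)) ∧
    ∃ g : Set A.X → Set C.X,
      IsBasedIsoOn (quotPres A.S (Tcomp phi psi) A.base)
        (quotPres C.S (Vcomp phi psi) C.base) g ∧
      (∀ (x : A.X) (y : B.X) (z : C.X),
        phi.f (coset phi.TN x) = coset phi.UN y →
        psi.f (coset psi.TN y) = coset psi.UN z →
        g (coset (Tcomp phi psi) x) = coset (Vcomp phi psi) z) ∧
      (∀ t ∈ A.S, ∀ v ∈ C.S,
        elemMapsTo g (quotRel (Tcomp phi psi) t) (quotRel (Vcomp phi psi) v) ↔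
          ∃ u ∈ B.S, elemRel phi t u ∧ elemRel psi u v) := by
  by_cases hφ : phi.TN.Nonempty
  · by_cases hψ : psi.TN.Nonempty
    · exact caseA phi psi hφ hψ
    · have hψe : psi.TN = ∅ := Set.not_nonempty_iff_eq_empty.mp hψ
      apply trivial_case phi psi
      · apply Set.Subset.antisymm (Tcomp_sub phi psi)
        intro t htS
        obtain ⟨u, huS, hrel⟩ := elemRel_exists phi hφ htS
        exact ⟨htS, u, huS, hrel, elemRel_empty psi hψe u (diagRel C.X)⟩
      · apply Set.Subset.antisymm (Vcomp_sub phi psi)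
        intro v hvS
        exact ⟨hvS, diagRel B.X, diag_mem B.isScheme, elemRel_diag phi hφ,
          elemRel_empty psi hψe (diagRel B.X) v⟩
      · intro t htS v hvS
        obtain ⟨u, huS, hrel⟩ := elemRel_exists phi hφ htS
        exact ⟨u, huS, hrel, elemRel_empty psi hψe u v⟩
  · have hφe : phi.TN = ∅ := Set.not_nonempty_iff_eq_empty.mp hφ
    by_cases hψ : psi.TN.Nonempty
    · apply trivial_case phi psi
      · apply Set.Subset.antisymm (Tcomp_sub phi psi)
        intro t htS
        exact ⟨htS, diagRel B.X, diag_mem B.isScheme,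
          elemRel_empty phi hφe t (diagRel B.X), elemRel_diag psi hψ⟩
      · apply Set.Subset.antisymm (Vcomp_sub phi psi)
        intro v hvS
        obtain ⟨u, huS, hrel⟩ := elemRel_surj psi hvS
        exact ⟨hvS, u, huS, elemRel_empty phi hφe (diagRel A.X) u, hrel⟩
      · intro t htS v hvS
        obtain ⟨u, huS, hrel⟩ := elemRel_surj psi hvS
        exact ⟨u, huS, elemRel_empty phi hφe t u, hrel⟩
    · have hψe : psi.TN = ∅ := Set.not_nonempty_iff_eq_empty.mp hψ
      apply trivial_case phi psi
      · apply Set.Subset.antisymm (Tcomp_sub phi psi)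
        intro t htS
        exact ⟨htS, diagRel B.X, diag_mem B.isScheme,
          elemRel_empty phi hφe t (diagRel B.X),
          elemRel_empty psi hψe (diagRel B.X) (diagRel C.X)⟩
      · apply Set.Subset.antisymm (Vcomp_sub phi psi)
        intro v hvS
        exact ⟨hvS, diagRel B.X, diag_mem B.isScheme,
          elemRel_empty phi hφe (diagRel A.X) (diagRel B.X),
          elemRel_empty psi hψe (diagRel B.X) v⟩
      · intro t htS v hvS
        exact ⟨diagRel B.X, diag_mem B.isScheme,
          elemRel_empty phi hφe t (diagRel B.X), elemRel_empty psi hψe (diagRel B.X) v⟩
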